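/- arXiv:2305.12512 — 7 statements merged into one kernel-verified Lean document; each statement's English description precedes it below -/
import Mathlib

section
/- Let Y be an n×d real matrix with rows y_1^T,…,y_n^T, let B be the (n+d)×n matrix whose first n rows form the identity I_n and whose last d rows form Y^T. Fix a nonempty subset A ⊆ [n] and p ∈ A, let Y_⋆ = Y[A,:] and D = (I_d + Y_⋆^T Y_⋆)^{-1}, and let u ∈ ℝ^n be the unique vector with u[i]=0 for i ∉ A, u[p]=1, and B[:,A∖{p}] u[A∖{p}] = −Proj_{ColSp(B[:,A∖{p}])}(B e_p). Then ‖Bu‖² = 1/(1 − y_p^T D y_p). -/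
/-!
Let `G = BᵀB = I + YYᵀ` and `w = Gu`. The orthogonality conditions say `w i = 0` for
`i ∈ A ∖ {p}`, and `u` vanishes off `A`, so `‖Bu‖² = uᵀw = w p =: c`. Restricted to `A`, the
same facts read `(I + Y⋆Y⋆ᵀ) u[A] = c eₚ`, hence `1 = u p = c · (I + Y⋆Y⋆ᵀ)⁻¹ₚₚ`. By the
Woodbury identity `(I + Y⋆Y⋆ᵀ)⁻¹ = I - Y⋆ D Y⋆ᵀ`, whose `(p, p)` entry is `1 - yₚᵀ D yₚ`.
-/

open Matrix

namespace Matrix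

variable {ι m n R K : Type*}

theorem fromRows_one_transpose_mul_self [Fintype m] [Fintype n] [DecidableEq n] [CommRing R]
    (Y : Matrix n m R) :
    (fromRows (1 : Matrix n n R) Yᵀ)ᵀ * fromRows (1 : Matrix n n R) Yᵀ = 1 + Y * Yᵀ := by
  rw [transpose_fromRows, fromCols_mul_fromRows, transpose_one, transpose_transpose,
    Matrix.one_mul]

theorem mulVec_dotProduct_mulVec_self [Fintype m] [Fintype n] [CommSemiring R]
    (B : Matrix m n R) (u : n → R) :
    (B *ᵥ u) ⬝ᵥ (B *ᵥ u) = u ⬝ᵥ ((Bᵀ * B) *ᵥ u) := by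
  rw [← mulVec_mulVec, mulVec_transpose, dotProduct_mulVec, dotProduct_comm]

theorem isUnit_one_add_transpose_mul_self [Fintype m] [Fintype n] [DecidableEq n]
    (X : Matrix m n ℝ) : IsUnit (1 + Xᵀ * X) := by
  refine (PosDef.one.add_posSemidef ?_).isUnit
  simpa using posSemidef_conjTranspose_mul_self X

theorem inv_one_add_mul_transpose_self [Fintype m] [Fintype n] [DecidableEq m] [DecidableEq n]
    [Field K] (X : Matrix m n K) (h : IsUnit (1 + Xᵀ * X)) :
    (1 + X * Xᵀ)⁻¹ = 1 - X * (1 + Xᵀ * X)⁻¹ * Xᵀ := by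
  simpa using add_mul_mul_inv_eq_sub 1 X 1 Xᵀ isUnit_one isUnit_one (by simpa using h)

theorem mul_mul_transpose_apply_self [Fintype n] [CommSemiring R] (X : Matrix m n R)
    (D : Matrix n n R) (i : m) :
    (X * D * Xᵀ : Matrix m m R) i i = X i ⬝ᵥ (D *ᵥ X i) := by
  rw [Matrix.mul_assoc]
  simp only [mul_apply, dotProduct, mulVec, transpose_apply, Finset.mul_sum]

theorem submatrix_one_add_mul_transpose_self [Fintype n] [DecidableEq m] [CommSemiring R]
    {k : Type*} [DecidableEq k] (Y : Matrix m n R) {f : k → m} (hf : Function.Injective f) :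
    (1 + Y * Yᵀ).submatrix f f = 1 + Y.submatrix f id * (Y.submatrix f id)ᵀ := by
  simp only [submatrix_add, Pi.add_apply, submatrix_one _ hf,
    submatrix_mul _ _ f id f Function.bijective_id, transpose_submatrix]

theorem mulVec_subtype_val_of_support [Fintype ι] [NonUnitalNonAssocSemiring R]
    (G : Matrix ι ι R) {A : Finset ι} {u : ι → R} (hu : ∀ i ∉ A, u i = 0) :
    (fun i : A => (G *ᵥ u) i) = G.submatrix (↑) (↑) *ᵥ fun i : A => u i := by
  ext i
  simp only [mulVec, dotProduct, submatrix_apply]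
  rw [← Finset.sum_subset A.subset_univ fun k _ hk => by rw [hu k hk, mul_zero],
    ← Finset.sum_coe_sort]

theorem inv_apply_self_mul_eq_one_of_mulVec_eq_single [Fintype ι] [DecidableEq ι] [Field K]
    {S : Matrix ι ι K} (hS : IsUnit S) {v : ι → K} {p : ι} {c : K}
    (h : S *ᵥ v = Pi.single p c) (hv : v p = 1) : S⁻¹ p p * c = 1 := by
  have hv_eq : v = S⁻¹ *ᵥ Pi.single p c := by
    rw [← h, mulVec_mulVec, nonsing_inv_mul _ ((isUnit_iff_isUnit_det S).mp hS), one_mulVec]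
  rw [← hv, hv_eq, mulVec_single]
  simp

end Matrix

theorem dotProduct_eq_mul_of_forall_ne {ι R : Type*} [Fintype ι] [CommSemiring R]
    {u w : ι → R} {p : ι} (h : ∀ i ≠ p, u i = 0 ∨ w i = 0) : u ⬝ᵥ w = u p * w p :=
  Finset.sum_eq_single p
    (fun i _ hi => (h i hi).elim (fun h => by rw [h, zero_mul]) fun h => by rw [h, mul_zero])
    (by simp)

theorem gsw_norm_Bu_sq_general (n d : ℕ) (Y : Matrix (Fin n) (Fin d) ℝ)
    (B : Matrix (Fin n ⊕ Fin d) (Fin n) ℝ) (hB : B = Matrix.fromRows 1 Yᵀ)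
    (A : Finset (Fin n)) (p : Fin n) (hp : p ∈ A)
    (Yst : Matrix {i // i ∈ A} (Fin d) ℝ) (hYst : Yst = Matrix.of fun i j => Y i.1 j)
    (D : Matrix (Fin d) (Fin d) ℝ) (hD : D = (1 + Ystᵀ * Yst)⁻¹)
    (u : Fin n → ℝ) (hu0 : ∀ i, i ∉ A → u i = 0) (hup : u p = 1)
    -- `Bu` is orthogonal to the span of the other active columns,
    -- i.e. `B[:,A∖{p}] u[A∖{p}] = -Proj_{ColSp(B[:,A∖{p}])}(B eₚ)`:
    (huo : ∀ i ∈ A, i ≠ p → (fun k => B k i) ⬝ᵥ (B *ᵥ u) = 0) :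
    (B *ᵥ u) ⬝ᵥ (B *ᵥ u) = 1 / (1 - Y p ⬝ᵥ (D *ᵥ Y p)) := by
  have hG : Bᵀ * B = 1 + Y * Yᵀ := hB ▸ fromRows_one_transpose_mul_self Y
  set c := ((Bᵀ * B) *ᵥ u) p
  have horth : ∀ i ∈ A, i ≠ p → ((Bᵀ * B) *ᵥ u) i = 0 := fun i hi hip => by
    rw [← mulVec_mulVec]; exact huo i hi hip
  have hnorm : (B *ᵥ u) ⬝ᵥ (B *ᵥ u) = c := by
    rw [mulVec_dotProduct_mulVec_self, dotProduct_eq_mul_of_forall_ne, hup, one_mul]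
    exact fun i hip => (em (i ∈ A)).elim (fun hi => .inr (horth i hi hip)) (.inl ∘ hu0 i)
  have hrestrict : (1 + Yst * Ystᵀ) *ᵥ (fun i : A => u i) = Pi.single ⟨p, hp⟩ c := by
    rw [show Yst = Y.submatrix (↑) id from hYst,
      ← submatrix_one_add_mul_transpose_self Y Subtype.val_injective, ← hG,
      ← mulVec_subtype_val_of_support _ hu0]
    ext i
    rcases eq_or_ne i ⟨p, hp⟩ with rfl | hip
    · simp [c]
    · rw [Pi.single_eq_of_ne hip, horth i i.2 (Subtype.coe_ne_coe.mpr hip)]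
  have hc : (1 - Y p ⬝ᵥ (D *ᵥ Y p)) * c = 1 := by
    have hS : IsUnit (1 + Yst * Ystᵀ) := by
      simpa using isUnit_one_add_transpose_mul_self Ystᵀ
    have := inv_apply_self_mul_eq_one_of_mulVec_eq_single hS hrestrict hup
    rwa [inv_one_add_mul_transpose_self Yst (isUnit_one_add_transpose_mul_self Yst), ← hD,
      Matrix.sub_apply, one_apply_eq, mul_mul_transpose_apply_self, hYst] at this
  rw [hnorm, eq_one_div_of_mul_eq_one_right hc]

/-- Norm-squared formula `‖Bu‖² = 1/(1 - yₚᵀ D yₚ)` for the Gram–Schmidt step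
direction `u` with pivot `p` and active set `A`, where `B = [Iₙ; Yᵀ]`. -/
theorem gsw_norm_Bu_sq (n d : ℕ) (Y : Matrix (Fin n) (Fin d) ℝ)
    (B : Matrix (Fin n ⊕ Fin d) (Fin n) ℝ) (hB : B = Matrix.fromRows 1 Yᵀ)
    (A : Finset (Fin n)) (hA : A.Nonempty) (p : Fin n) (hp : p ∈ A)
    (Yst : Matrix {i // i ∈ A} (Fin d) ℝ) (hYst : Yst = Matrix.of fun i j => Y i.1 j)
    (D : Matrix (Fin d) (Fin d) ℝ) (hD : D = (1 + Ystᵀ * Yst)⁻¹)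
    (u : Fin n → ℝ) (hu0 : ∀ i, i ∉ A → u i = 0) (hup : u p = 1)
    -- `Bu` is orthogonal to the span of the other active columns,
    -- i.e. `B[:,A∖{p}] u[A∖{p}] = -Proj_{ColSp(B[:,A∖{p}])}(B eₚ)`:
    (huo : ∀ i ∈ A, i ≠ p → (fun k => B k i) ⬝ᵥ (B *ᵥ u) = 0) :
    (B *ᵥ u) ⬝ᵥ (B *ᵥ u) = 1 / (1 - Y p ⬝ᵥ (D *ᵥ Y p)) :=
  gsw_norm_Bu_sq_general n d Y B hB A p hp Yst hYst D hD u hu0 hup huo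
end

section
/- In the setting above, if additionally max_{i∈[n]} ‖y_i‖ ≤ ζ, then 1 ≤ ‖Bu‖² ≤ 1 + ζ²(1+ζ²). -/
open Matrix

/-!
Write `v = Bu`. The identity block of `B` copies `u` into `v`, so `‖v‖² ≥ u p ^ 2 = 1`.
Expanding `v ⬝ v = ∑ᵢ uᵢ (Bᵀ i ⬝ v)`, every term but `i = p` vanishes (either `uᵢ = 0` or the
`i`-th column is orthogonal to `v`), so `v ⬝ v = b ⬝ v` for the `p`-th column `b` of `B`. Then
`0 ≤ (b - v) ⬝ (b - v) = b ⬝ b - v ⬝ v` gives `‖v‖² ≤ ‖b‖² = 1 + ‖y_p‖² ≤ 1 + ζ²`, which is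
stronger than the claimed upper bound.
-/

namespace Matrix

variable {m n R : Type*} [Fintype m] [Fintype n]

section CommSemiring

variable [CommSemiring R]

theorem mulVec_dotProduct_eq_sum_mul_transpose_dotProduct (B : Matrix m n R) (u : n → R)
    (w : m → R) : (B *ᵥ u) ⬝ᵥ w = ∑ i, u i * (Bᵀ i ⬝ᵥ w) := by
  rw [dotProduct_comm, dotProduct_mulVec, dotProduct_comm, ← mulVec_transpose]
  rfl

theorem mulVec_dotProduct_self_eq_of_orthogonal (B : Matrix m n R) (u : n → R) (p : n)
    (h : ∀ i ≠ p, u i = 0 ∨ Bᵀ i ⬝ᵥ (B *ᵥ u) = 0) :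
    (B *ᵥ u) ⬝ᵥ (B *ᵥ u) = u p * (Bᵀ p ⬝ᵥ (B *ᵥ u)) := by
  rw [mulVec_dotProduct_eq_sum_mul_transpose_dotProduct]
  refine Fintype.sum_eq_single p fun i hip => ?_
  rcases h i hip with hu | hcol
  · rw [hu, zero_mul]
  · rw [hcol, mul_zero]

variable [DecidableEq n]

theorem fromRows_one_mulVec_dotProduct_self (M : Matrix m n R) (u : n → R) :
    (fromRows (1 : Matrix n n R) M *ᵥ u) ⬝ᵥ (fromRows (1 : Matrix n n R) M *ᵥ u) =
      u ⬝ᵥ u + (M *ᵥ u) ⬝ᵥ (M *ᵥ u) := by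
  rw [fromRows_mulVec, one_mulVec]
  exact sumElim_dotProduct_sumElim _ _ _ _

theorem transpose_fromRows_one_dotProduct_self (M : Matrix m n R) (p : n) :
    (fromRows (1 : Matrix n n R) M)ᵀ p ⬝ᵥ (fromRows (1 : Matrix n n R) M)ᵀ p =
      1 + Mᵀ p ⬝ᵥ Mᵀ p := by
  have h := fromRows_one_mulVec_dotProduct_self M (Pi.single p 1)
  simp only [mulVec_single_one, dotProduct_single_one, Pi.single_eq_same] at h
  exact h

end CommSemiring

section OrderedRing

variable [CommRing R] [LinearOrder R] [IsStrictOrderedRing R]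

theorem dotProduct_self_nonneg (v : n → R) : 0 ≤ v ⬝ᵥ v :=
  Fintype.sum_nonneg fun i => mul_self_nonneg (v i)

theorem sq_apply_le_dotProduct_self (v : n → R) (i : n) : v i ^ 2 ≤ v ⬝ᵥ v := by
  rw [sq]
  exact Finset.single_le_sum (f := fun j => v j * v j) (fun j _ => mul_self_nonneg (v j))
    (Finset.mem_univ i)

theorem dotProduct_self_le_of_dotProduct_self_eq {v b : n → R} (h : v ⬝ᵥ v = b ⬝ᵥ v) :
    v ⬝ᵥ v ≤ b ⬝ᵥ b := by
  have hexpand : (b - v) ⬝ᵥ (b - v) = b ⬝ᵥ b - v ⬝ᵥ v := by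
    rw [sub_dotProduct, dotProduct_sub, dotProduct_sub, dotProduct_comm v b, ← h]
    ring
  linarith [dotProduct_self_nonneg (b - v)]

end OrderedRing

end Matrix

theorem gsw_norm_Bu_sq_bounds_general (n d : ℕ) (Y : Matrix (Fin n) (Fin d) ℝ) (ζ : ℝ)
    (hrow : ∀ i, Real.sqrt (Y i ⬝ᵥ Y i) ≤ ζ)
    (B : Matrix (Fin n ⊕ Fin d) (Fin n) ℝ) (hB : B = Matrix.fromRows 1 Yᵀ)
    (A : Finset (Fin n)) (p : Fin n)
    (u : Fin n → ℝ) (hu0 : ∀ i, i ∉ A → u i = 0) (hup : u p = 1)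
    (huo : ∀ i ∈ A, i ≠ p → (fun k => B k i) ⬝ᵥ (B *ᵥ u) = 0) :
    1 ≤ (B *ᵥ u) ⬝ᵥ (B *ᵥ u) ∧
      (B *ᵥ u) ⬝ᵥ (B *ᵥ u) ≤ 1 + ζ ^ 2 * (1 + ζ ^ 2) := by
  have hYp : Y p ⬝ᵥ Y p ≤ ζ ^ 2 := (Real.sqrt_le_iff.mp (hrow p)).2
  have hkey : (B *ᵥ u) ⬝ᵥ (B *ᵥ u) = Bᵀ p ⬝ᵥ (B *ᵥ u) := by
    rw [mulVec_dotProduct_self_eq_of_orthogonal B u p, hup, one_mul]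
    intro i hip
    by_cases hiA : i ∈ A
    · exact Or.inr (huo i hiA hip)
    · exact Or.inl (hu0 i hiA)
  refine ⟨?_, ?_⟩
  · rw [hB, fromRows_one_mulVec_dotProduct_self]
    have hp_sq := sq_apply_le_dotProduct_self u p
    rw [hup, one_pow] at hp_sq
    linarith [dotProduct_self_nonneg (Yᵀ *ᵥ u)]
  · calc (B *ᵥ u) ⬝ᵥ (B *ᵥ u) ≤ Bᵀ p ⬝ᵥ Bᵀ p :=
          dotProduct_self_le_of_dotProduct_self_eq hkey
      _ = 1 + Y p ⬝ᵥ Y p := by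
        rw [hB, transpose_fromRows_one_dotProduct_self, transpose_transpose]
      _ ≤ 1 + ζ ^ 2 * (1 + ζ ^ 2) := by nlinarith [sq_nonneg (ζ ^ 2)]

/-- Bounds `1 ≤ ‖Bu‖² ≤ 1 + ζ²(1+ζ²)` for the Gram–Schmidt step direction `u`
when the rows of `Y` have Euclidean norm at most `ζ`. -/
theorem gsw_norm_Bu_sq_bounds (n d : ℕ) (Y : Matrix (Fin n) (Fin d) ℝ) (ζ : ℝ)
    (hrow : ∀ i, Real.sqrt (Y i ⬝ᵥ Y i) ≤ ζ)
    (B : Matrix (Fin n ⊕ Fin d) (Fin n) ℝ) (hB : B = Matrix.fromRows 1 Yᵀ)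
    (A : Finset (Fin n)) (hA : A.Nonempty) (p : Fin n) (hp : p ∈ A)
    (u : Fin n → ℝ) (hu0 : ∀ i, i ∉ A → u i = 0) (hup : u p = 1)
    (huo : ∀ i ∈ A, i ≠ p → (fun k => B k i) ⬝ᵥ (B *ᵥ u) = 0) :
    1 ≤ (B *ᵥ u) ⬝ᵥ (B *ᵥ u) ∧
      (B *ᵥ u) ⬝ᵥ (B *ᵥ u) ≤ 1 + ζ ^ 2 * (1 + ζ ^ 2) :=
  gsw_norm_Bu_sq_bounds_general n d Y ζ hrow B hB A p u hu0 hup huo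
end

section
/- In the setting above, the step direction vector satisfies u = (1/(1 − y_p^T D y_p)) (e_p − I_n[:,A] Y_⋆ D y_p), where e_p ∈ ℝ^n is the p-th standard basis vector. -/
open Matrix

/-! The Gram matrix `BᵀB = 1 + YYᵀ` is positive definite, so a vector `x` is determined by
knowing, at every index `i`, either `x i` or `(BᵀB x) i`: the difference `e` of two such vectors
satisfies `eᵀ(BᵀB)e = 0`. The conditions on `u` are of this kind (its entries off `A` and
at `p`, orthogonality on `A ∖ {p}`), so it suffices to check them for the right-hand side.
With `z = D yₚ`, i.e. `(1 + Y⋆ᵀY⋆) z = yₚ`, one gets `Yᵀ(eₚ - w) = yₚ - Y⋆ᵀY⋆ z = z` for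
`w = I[:,A] Y⋆ z`, hence `((1 + YYᵀ)(eₚ - w))ᵢ = δᵢₚ` for `i ∈ A`. The normalisation is
legitimate because `yₚᵀz = ‖z‖² + ‖Y⋆z‖² ≥ ‖z‖² + (yₚᵀz)²` forces `yₚᵀz < 1`. -/

namespace Matrix

variable {m k R : Type*} [Fintype m]

theorem PosDef.eq_of_forall_eq_or_mulVec_eq [CommRing R] [PartialOrder R] [StarRing R]
    {M : Matrix m m R} (hM : M.PosDef) {x y : m → R}
    (h : ∀ i, x i = y i ∨ (M *ᵥ x) i = (M *ᵥ y) i) : x = y := by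
  by_contra hxy
  have hpos := hM.dotProduct_mulVec_pos (sub_ne_zero.mpr hxy)
  have hzero : star (x - y) ⬝ᵥ (M *ᵥ (x - y)) = 0 :=
    Finset.sum_eq_zero fun i _ => by
      rcases h i with hi | hi <;> simp [mulVec_sub, hi]
  exact hpos.ne' hzero

theorem posDef_one_add_mul_transpose [Fintype k] [DecidableEq m] (Y : Matrix m k ℝ) :
    (1 + Y * Yᵀ).PosDef :=
  PosDef.one.add_posSemidef (by simpa using posSemidef_self_mul_conjTranspose Y)

theorem row_dotProduct_lt_one [Fintype k] [DecidableEq k] (M : Matrix m k ℝ) (a : m)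
    {z : k → ℝ} (hz : (1 + Mᵀ * M) *ᵥ z = M a) : M a ⬝ᵥ z < 1 := by
  have hsplit : M a ⬝ᵥ z = z ⬝ᵥ z + (M *ᵥ z) ⬝ᵥ (M *ᵥ z) := by
    rw [← hz, add_mulVec, one_mulVec, ← mulVec_mulVec, add_dotProduct,
      dotProduct_comm (Mᵀ *ᵥ _), dotProduct_mulVec, vecMul_transpose]
  have hrow : (M a ⬝ᵥ z) ^ 2 ≤ (M *ᵥ z) ⬝ᵥ (M *ᵥ z) :=
    (sq (M a ⬝ᵥ z)).trans_le <|
      Finset.single_le_sum (f := fun i => (M *ᵥ z) i * (M *ᵥ z) i)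
        (fun i _ => mul_self_nonneg _) (Finset.mem_univ a)
  by_contra! h1
  have hzz : z ⬝ᵥ z ≤ 0 := by nlinarith [hsplit, hrow]
  have hz0 : z = 0 := dotProduct_self_eq_zero.mp <|
    hzz.antisymm (Finset.sum_nonneg fun i _ => mul_self_nonneg (z i))
  rw [hz0, dotProduct_zero] at h1
  norm_num at h1

theorem transpose_mulVec_ite_mem [DecidableEq m] [CommSemiring R] (Y : Matrix m k R)
    (A : Finset m) (x : m → R) :
    Yᵀ *ᵥ (fun i => if i ∈ A then x i else 0) =
      (Y.submatrix (Subtype.val : A → m) id)ᵀ *ᵥ fun i : A => x i := by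
  funext j
  simp only [mulVec, dotProduct, transpose_apply, submatrix_apply, id, mul_ite, mul_zero]
  rw [Fintype.sum_ite_mem, ← Finset.sum_coe_sort A]

section StepDirection

variable [Fintype k] [DecidableEq m] [DecidableEq k] [CommRing R] (Y : Matrix m k R)
  (A : Finset m) (p : m) {z : k → R}

theorem transpose_mulVec_single_sub_ite_mem
    (hz : (1 + (Y.submatrix (Subtype.val : A → m) id)ᵀ * Y.submatrix (Subtype.val : A → m) id)
      *ᵥ z = Y p) :
    Yᵀ *ᵥ (Pi.single p 1 - fun i => if i ∈ A then Y i ⬝ᵥ z else 0) = z := by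
  rw [add_mulVec, one_mulVec, ← mulVec_mulVec] at hz
  rw [mulVec_sub, transpose_mulVec_ite_mem, mulVec_single_one]
  change Y p - _ *ᵥ (Y.submatrix (Subtype.val : A → m) id *ᵥ z) = z
  rw [← hz, add_sub_cancel_right]

theorem one_add_mul_transpose_mulVec_single_sub_ite_mem
    (hz : (1 + (Y.submatrix (Subtype.val : A → m) id)ᵀ * Y.submatrix (Subtype.val : A → m) id)
      *ᵥ z = Y p) {i : m} (hi : i ∈ A) :
    ((1 + Y * Yᵀ : Matrix m m R) *ᵥ
        (Pi.single p 1 - fun i => if i ∈ A then Y i ⬝ᵥ z else 0)) i =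
      (Pi.single p 1 : m → R) i := by
  rw [add_mulVec, one_mulVec, ← mulVec_mulVec, transpose_mulVec_single_sub_ite_mem Y A p hz]
  simp [hi, mulVec]

end StepDirection

end Matrix

theorem gsw_step_direction_formula_general (n d : ℕ) (Y : Matrix (Fin n) (Fin d) ℝ)
    (B : Matrix (Fin n ⊕ Fin d) (Fin n) ℝ) (hB : B = Matrix.fromRows 1 Yᵀ)
    (A : Finset (Fin n)) (p : Fin n) (hp : p ∈ A)
    (Yst : Matrix {i // i ∈ A} (Fin d) ℝ) (hYst : Yst = Matrix.of fun i j => Y i.1 j)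
    (D : Matrix (Fin d) (Fin d) ℝ) (hD : D = (1 + Ystᵀ * Yst)⁻¹)
    (u : Fin n → ℝ) (hu0 : ∀ i, i ∉ A → u i = 0) (hup : u p = 1)
    (huo : ∀ i ∈ A, i ≠ p → (fun k => B k i) ⬝ᵥ (B *ᵥ u) = 0) :
    u = (1 / (1 - Y p ⬝ᵥ (D *ᵥ Y p))) •
      (Pi.single p 1 - fun i => if i ∈ A then Y i ⬝ᵥ (D *ᵥ Y p) else 0) := by
  have hGram : Bᵀ * B = 1 + Y * Yᵀ := by
    rw [hB, transpose_fromRows, fromCols_mul_fromRows]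
    simp
  have hM : (1 + Ystᵀ * Yst).PosDef := by simpa using posDef_one_add_mul_transpose Ystᵀ
  have hz : (1 + Ystᵀ * Yst) *ᵥ (D *ᵥ Y p) = Y p := by
    rw [hD, mulVec_mulVec, mul_nonsing_inv _ ((isUnit_iff_isUnit_det _).mp hM.isUnit), one_mulVec]
  subst hYst
  have hden : Y p ⬝ᵥ (D *ᵥ Y p) < 1 :=
    row_dotProduct_lt_one (of fun (i : A) j => Y i j) ⟨p, hp⟩ hz
  refine (posDef_one_add_mul_transpose Y).eq_of_forall_eq_or_mulVec_eq fun i => ?_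
  by_cases hi : i ∈ A
  · by_cases hip : i = p
    · left
      subst hip
      simp [hup, hi, inv_mul_cancel₀ (sub_pos.mpr hden).ne']
    · right
      have hGu : ((1 + Y * Yᵀ) *ᵥ u) i = 0 := by
        rw [← hGram, ← mulVec_mulVec]
        exact huo i hi hip
      rw [hGu, mulVec_smul, Pi.smul_apply,
        one_add_mul_transpose_mulVec_single_sub_ite_mem Y A p hz hi]
      simp [hip]
  · left
    have hpi : p ≠ i := fun h => hi (h ▸ hp)
    simp [hu0 i hi, hi, hpi]

/-- Explicit formula for the Gram–Schmidt step direction: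
`u = (1/(1 - yₚᵀ D yₚ)) (eₚ - Iₙ[:,A] Y⋆ D yₚ)`. -/
theorem gsw_step_direction_formula (n d : ℕ) (Y : Matrix (Fin n) (Fin d) ℝ)
    (B : Matrix (Fin n ⊕ Fin d) (Fin n) ℝ) (hB : B = Matrix.fromRows 1 Yᵀ)
    (A : Finset (Fin n)) (hA : A.Nonempty) (p : Fin n) (hp : p ∈ A)
    (Yst : Matrix {i // i ∈ A} (Fin d) ℝ) (hYst : Yst = Matrix.of fun i j => Y i.1 j)
    (D : Matrix (Fin d) (Fin d) ℝ) (hD : D = (1 + Ystᵀ * Yst)⁻¹)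
    (u : Fin n → ℝ) (hu0 : ∀ i, i ∉ A → u i = 0) (hup : u p = 1)
    (huo : ∀ i ∈ A, i ≠ p → (fun k => B k i) ⬝ᵥ (B *ᵥ u) = 0) :
    u = (1 / (1 - Y p ⬝ᵥ (D *ᵥ Y p))) •
      (Pi.single p 1 - fun i => if i ∈ A then Y i ⬝ᵥ (D *ᵥ Y p) else 0) :=
  gsw_step_direction_formula_general n d Y B hB A p hp Yst hYst D hD u hu0 hup huo
end

section
/- Let x_1,…,x_n be real numbers with Σ_{i∈[n]} x_i = 0, let a ∈ [n] with n ≥ 4, let A be a uniformly random size-a subset of [n], and W = Σ_{i∈A} x_i. Then E[W⁴] = (3(a)_2(n−a)_2/(n)_4)(Σ_i x_i²)² + (a(n−a)/(n)_2)(1 − 6(a−1)(n−a−1)/((n−2)(n−3))) Σ_i x_i⁴, where (m)_k = m(m−1)···(m−k+1). -/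
/-!
Writing `W⁴` in terms of sums of products over tuples of *distinct* indices of `A` (the
augmented monomial symmetric functions), each term can be averaged separately: an injective
`k`-tuple lies in `C(n - k, a - k)` of the `a`-subsets, so averaging a distinct-tuple sum over `A`
multiplies its value over all of `[n]` by the inclusion probability `(a)_k / (n)_k`. Over `[n]`
the distinct-tuple sums are explicit polynomials in the power sums, and `∑ xᵢ = 0` leaves only
`(∑ xᵢ²)²` and `∑ xᵢ⁴`.
-/

open Finset Matrix

variable {α : Type*} [DecidableEq α]

section CommSemiring

variable {R : Type*} [CommSemiring R]

def distinctProdSum {k : ℕ} (A : Finset α) (f : Fin k → α → R) : R :=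
  ∑ v ∈ Fintype.piFinset (fun _ => A) with Function.Injective v, ∏ t, f t (v t)

theorem distinctProdSum_zero (A : Finset α) (f : Fin 0 → α → R) :
    distinctProdSum A f = 1 := by
  simp [distinctProdSum, Function.injective_of_subsingleton]

theorem distinctProdSum_succ {k : ℕ} (A : Finset α) (f : Fin (k + 1) → α → R) :
    distinctProdSum A f = ∑ i ∈ A, f 0 i * distinctProdSum (A.erase i) (Fin.tail f) := by
  simp only [distinctProdSum, mul_sum, sum_sigma']
  have hmem (i : α) (w : Fin k → α) : (Fin.cons i w ∈ Fintype.piFinset (fun _ => A) ∧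
        Function.Injective (Fin.cons i w : Fin (k + 1) → α)) ↔
      (i ∈ A ∧ w ∈ Fintype.piFinset (fun _ => A.erase i) ∧ Function.Injective w) := by
    simp only [Fintype.mem_piFinset, Fin.forall_fin_succ, Fin.cons_zero, Fin.cons_succ,
      Fin.cons_injective_iff, mem_erase, Set.mem_range, not_exists]
    grind
  refine sum_nbij' (fun v => ⟨v 0, Fin.tail v⟩) (fun p => Fin.cons p.1 p.2) ?_ ?_ ?_ ?_ ?_
  · intro v hv
    rw [mem_filter, ← Fin.cons_self_tail v, hmem] at hv
    simpa using hv
  · rintro ⟨i, w⟩ hp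
    simpa [-Fintype.mem_piFinset, hmem] using hp
  · intro v _
    simp
  · intro p _
    simp
  · intro v _
    simp [Fin.prod_univ_succ, Fin.tail]

theorem distinctProdSum_one (A : Finset α) (f : α → R) :
    distinctProdSum A ![f] = ∑ i ∈ A, f i := by
  simp [distinctProdSum_succ, distinctProdSum_zero]

theorem card_filter_powersetCard_subset_mul_descFactorial (s t : Finset α) (a : ℕ)
    (hst : s ⊆ t) :
    #{A ∈ t.powersetCard a | s ⊆ A} * (#t).descFactorial #s =
      (#t).choose a * a.descFactorial #s := by
  by_cases hsa : #s ≤ a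
  · rw [card_filter_powersetCard_subset s t a hst hsa, Nat.descFactorial_eq_factorial_mul_choose,
      Nat.descFactorial_eq_factorial_mul_choose]
    calc _ = Nat.factorial #s * ((#t).choose #s * (#t - #s).choose (a - #s)) := by ring
      _ = _ := by rw [← Nat.choose_mul hsa]; ring
  · have hempty : {A ∈ t.powersetCard a | s ⊆ A} = ∅ := filter_eq_empty_iff.2
      fun A hA hsA => hsa ((card_le_card hsA).trans (mem_powersetCard.1 hA).2.le)
    simp [hempty, Nat.descFactorial_eq_zero_iff_lt.2 (not_le.1 hsa)]

theorem descFactorial_mul_sum_powersetCard_distinctProdSum [Fintype α] {k : ℕ} (a : ℕ)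
    (f : Fin k → α → R) :
    ((Fintype.card α).descFactorial k : R) * ∑ A ∈ powersetCard a univ, distinctProdSum A f =
      (Fintype.card α).choose a * a.descFactorial k * distinctProdSum univ f := by
  have hrestrict (A : Finset α) : distinctProdSum A f =
      ∑ v ∈ Fintype.piFinset (fun _ => univ) with Function.Injective v,
        if univ.image v ⊆ A then ∏ t, f t (v t) else 0 := by
    rw [← sum_filter, filter_filter, distinctProdSum]
    refine sum_congr ?_ fun _ _ => rfl
    ext v
    simp [image_subset_iff, and_comm]
  rw [sum_congr rfl fun A _ => hrestrict A, sum_comm, mul_sum, distinctProdSum, mul_sum]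
  refine sum_congr rfl fun v hv => ?_
  have hcard : #(univ.image v) = k := by
    rw [card_image_of_injective _ (mem_filter.1 hv).2, card_univ, Fintype.card_fin]
  have hcount := card_filter_powersetCard_subset_mul_descFactorial _ univ a
    (subset_univ (univ.image v))
  rw [hcard, card_univ] at hcount
  rw [← sum_filter, sum_const, nsmul_eq_mul, ← mul_assoc]
  norm_cast
  rw [mul_comm (Nat.descFactorial _ _), hcount]

end CommSemiring

theorem sum_powersetCard_distinctProdSum {K : Type*} [Field K] [CharZero K] [Fintype α]
    {k : ℕ} (a : ℕ) (hk : k ≤ Fintype.card α) (f : Fin k → α → K) :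
    ∑ A ∈ powersetCard a univ, distinctProdSum A f =
      (Fintype.card α).choose a * (a.descFactorial k / (Fintype.card α).descFactorial k) *
        distinctProdSum univ f := by
  have hne : ((Fintype.card α).descFactorial k : K) ≠ 0 := by
    exact_mod_cast (Nat.descFactorial_pos.2 hk).ne'
  rw [← mul_right_inj' hne, descFactorial_mul_sum_powersetCard_distinctProdSum]
  field_simp

section CommRing

variable {R : Type*} [CommRing R]

theorem distinctProdSum_two (A : Finset α) (f g : α → R) :
    distinctProdSum A ![f, g] = (∑ i ∈ A, f i) * (∑ i ∈ A, g i) - ∑ i ∈ A, f i * g i := by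
  rw [distinctProdSum_succ]
  simp only [cons_val_zero, Fin.tail_vecCons, distinctProdSum_one]
  calc _ = ∑ i ∈ A, ((∑ j ∈ A, g j) * f i - f i * g i) :=
        sum_congr rfl fun i hi => by rw [sum_erase_eq_sub hi]; ring
    _ = _ := by rw [sum_sub_distrib, ← mul_sum]; ring

theorem distinctProdSum_three (A : Finset α) (f g h : α → R) :
    distinctProdSum A ![f, g, h] =
      (∑ i ∈ A, f i) * (∑ i ∈ A, g i) * (∑ i ∈ A, h i)
        - (∑ i ∈ A, f i * g i) * (∑ i ∈ A, h i) - (∑ i ∈ A, f i * h i) * (∑ i ∈ A, g i)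
        - (∑ i ∈ A, g i * h i) * (∑ i ∈ A, f i) + 2 * ∑ i ∈ A, f i * g i * h i := by
  rw [distinctProdSum_succ]
  simp only [cons_val_zero, Fin.tail_vecCons, distinctProdSum_two]
  calc _ = ∑ i ∈ A, (((∑ j ∈ A, g j) * (∑ j ∈ A, h j) - ∑ j ∈ A, g j * h j) * f i
          - (∑ j ∈ A, h j) * (f i * g i) - (∑ j ∈ A, g j) * (f i * h i)
          + 2 * (f i * g i * h i)) :=
        sum_congr rfl fun i hi => by simp only [sum_erase_eq_sub hi]; ring
    _ = _ := by simp only [sum_add_distrib, sum_sub_distrib, ← mul_sum]; ring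

theorem distinctProdSum_four (A : Finset α) (f g h l : α → R) :
    distinctProdSum A ![f, g, h, l] =
      (∑ i ∈ A, f i) * (∑ i ∈ A, g i) * (∑ i ∈ A, h i) * (∑ i ∈ A, l i)
        - (∑ i ∈ A, f i * g i) * (∑ i ∈ A, h i) * (∑ i ∈ A, l i)
        - (∑ i ∈ A, f i * h i) * (∑ i ∈ A, g i) * (∑ i ∈ A, l i)
        - (∑ i ∈ A, f i * l i) * (∑ i ∈ A, g i) * (∑ i ∈ A, h i)
        - (∑ i ∈ A, g i * h i) * (∑ i ∈ A, f i) * (∑ i ∈ A, l i)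
        - (∑ i ∈ A, g i * l i) * (∑ i ∈ A, f i) * (∑ i ∈ A, h i)
        - (∑ i ∈ A, h i * l i) * (∑ i ∈ A, f i) * (∑ i ∈ A, g i)
        + (∑ i ∈ A, f i * g i) * (∑ i ∈ A, h i * l i)
        + (∑ i ∈ A, f i * h i) * (∑ i ∈ A, g i * l i)
        + (∑ i ∈ A, f i * l i) * (∑ i ∈ A, g i * h i)
        + 2 * (∑ i ∈ A, f i * g i * h i) * (∑ i ∈ A, l i)
        + 2 * (∑ i ∈ A, f i * g i * l i) * (∑ i ∈ A, h i)
        + 2 * (∑ i ∈ A, f i * h i * l i) * (∑ i ∈ A, g i)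
        + 2 * (∑ i ∈ A, g i * h i * l i) * (∑ i ∈ A, f i)
        - 6 * ∑ i ∈ A, f i * g i * h i * l i := by
  rw [distinctProdSum_succ]
  simp only [cons_val_zero, Fin.tail_vecCons, distinctProdSum_three]
  set G := ∑ j ∈ A, g j
  set H := ∑ j ∈ A, h j
  set L := ∑ j ∈ A, l j
  calc _ = ∑ i ∈ A, ((G * H * L - (∑ j ∈ A, g j * h j) * L - (∑ j ∈ A, g j * l j) * H
            - (∑ j ∈ A, h j * l j) * G + 2 * ∑ j ∈ A, g j * h j * l j) * f i
          - (H * L - ∑ j ∈ A, h j * l j) * (f i * g i)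
          - (G * L - ∑ j ∈ A, g j * l j) * (f i * h i)
          - (G * H - ∑ j ∈ A, g j * h j) * (f i * l i)
          + 2 * L * (f i * g i * h i) + 2 * H * (f i * g i * l i) + 2 * G * (f i * h i * l i)
          - 6 * (f i * g i * h i * l i)) :=
        sum_congr rfl fun i hi => by simp only [G, H, L, sum_erase_eq_sub hi]; ring
    _ = _ := by simp only [sum_add_distrib, sum_sub_distrib, ← mul_sum]; ring

theorem sum_pow_four_eq_distinctProdSum (A : Finset α) (x : α → R) :
    (∑ i ∈ A, x i) ^ 4 = distinctProdSum A ![x, x, x, x] + 6 * distinctProdSum A ![x ^ 2, x, x]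
      + 3 * distinctProdSum A ![x ^ 2, x ^ 2] + 4 * distinctProdSum A ![x ^ 3, x]
      + distinctProdSum A ![x ^ 4] := by
  rw [distinctProdSum_four, distinctProdSum_three, distinctProdSum_two, distinctProdSum_two,
    distinctProdSum_one]
  simp only [Pi.pow_apply]
  ring_nf

theorem cast_descFactorial_eq_prod_range (m k : ℕ) :
    (m.descFactorial k : R) = ∏ j ∈ range k, ((m : R) - j) := by
  rw [← descPochhammer_eval_eq_descFactorial, descPochhammer_eval_eq_prod_range]

end CommRing

theorem swor_fourth_moment_general (n a : ℕ) (han : a ≤ n) (hn : 4 ≤ n)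
    (x : Fin n → ℝ) (hx : ∑ i, x i = 0) :
    (∑ A ∈ Finset.powersetCard a (Finset.univ : Finset (Fin n)), (∑ i ∈ A, x i) ^ 4) /
        (Finset.powersetCard a (Finset.univ : Finset (Fin n))).card =
      (3 * ((a : ℝ) * ((a : ℝ) - 1)) * (((n : ℝ) - a) * ((n : ℝ) - a - 1)) /
          ((n : ℝ) * ((n : ℝ) - 1) * ((n : ℝ) - 2) * ((n : ℝ) - 3))) *
        (∑ i, x i ^ 2) ^ 2 +
      ((a : ℝ) * ((n : ℝ) - a) / ((n : ℝ) * ((n : ℝ) - 1))) *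
        (1 - 6 * ((a : ℝ) - 1) * ((n : ℝ) - a - 1) / (((n : ℝ) - 2) * ((n : ℝ) - 3))) *
        ∑ i, x i ^ 4 := by
  have hk {k : ℕ} (hk4 : k ≤ 4) : k ≤ Fintype.card (Fin n) := by
    rw [Fintype.card_fin]; omega
  simp only [sum_pow_four_eq_distinctProdSum, sum_add_distrib, ← mul_sum]
  rw [sum_powersetCard_distinctProdSum a (hk le_rfl), distinctProdSum_four,
    sum_powersetCard_distinctProdSum a (hk (by norm_num)), distinctProdSum_three,
    sum_powersetCard_distinctProdSum a (hk (by norm_num)), distinctProdSum_two,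
    sum_powersetCard_distinctProdSum a (hk (by norm_num)), distinctProdSum_two,
    sum_powersetCard_distinctProdSum a (hk (by norm_num)), distinctProdSum_one]
  simp only [Pi.pow_apply, ← sq, ← pow_succ, hx, card_powersetCard, card_univ,
    Fintype.card_fin, cast_descFactorial_eq_prod_range, prod_range_succ, prod_range_zero,
    Nat.cast_zero, Nat.cast_one, Nat.cast_ofNat, sub_zero, one_mul]
  have h4n : (4 : ℝ) ≤ n := by exact_mod_cast hn
  have hchoose : (n.choose a : ℝ) ≠ 0 := by exact_mod_cast (Nat.choose_pos han).ne'
  have : (n : ℝ) ≠ 0 := by linarith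
  have : (n : ℝ) - 1 ≠ 0 := by linarith
  have : (n : ℝ) - 2 ≠ 0 := by linarith
  have : (n : ℝ) - 3 ≠ 0 := by linarith
  field_simp
  ring

/-- Fourth moment of `W = ∑_{i∈A} x i` for a uniformly random size-`a` subset
`A` of `[n]` (with `n ≥ 4`), when `∑ᵢ x i = 0`. -/
theorem swor_fourth_moment (n a : ℕ) (ha1 : 1 ≤ a) (han : a ≤ n) (hn : 4 ≤ n)
    (x : Fin n → ℝ) (hx : ∑ i, x i = 0) :
    (∑ A ∈ Finset.powersetCard a (Finset.univ : Finset (Fin n)), (∑ i ∈ A, x i) ^ 4) /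
        (Finset.powersetCard a (Finset.univ : Finset (Fin n))).card =
      (3 * ((a : ℝ) * ((a : ℝ) - 1)) * (((n : ℝ) - a) * ((n : ℝ) - a - 1)) /
          ((n : ℝ) * ((n : ℝ) - 1) * ((n : ℝ) - 2) * ((n : ℝ) - 3))) *
        (∑ i, x i ^ 2) ^ 2 +
      ((a : ℝ) * ((n : ℝ) - a) / ((n : ℝ) * ((n : ℝ) - 1))) *
        (1 - 6 * ((a : ℝ) - 1) * ((n : ℝ) - a - 1) / (((n : ℝ) - 2) * ((n : ℝ) - 3))) *
        ∑ i, x i ^ 4 :=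
  swor_fourth_moment_general n a han hn x hx
end

section
/- Let v ∈ ℝ^n with v^T Y = 0 for an n×d real matrix Y whose rows y_i satisfy ‖y_i‖ ≤ ζ, and let A be a uniformly random subset of [n] of size n−t+1 for some t ∈ [n]. Then E[‖v[A]^T Y[A,:]‖²] ≤ ((n−t+1)(t−1)/(n(n−1))) ‖v‖_∞² ‖Y‖_Frob², where v[A] and Y[A,:] are the restrictions to coordinates/rows in A. -/
/-! Since the `x i` sum to zero, `‖∑ i ∈ A, x i‖² = -⟪∑ i ∈ A, x i, ∑ j ∉ A, x j⟫`. Summed over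
all `(k + 1)`-subsets `A` of an `n`-set, a pair `(i, j)` contributes `⟪x i, x j⟫` once for every
`A` containing `i` but not `j`: never if `i = j`, and `(n - 2).choose k` times otherwise. Using
`∑ x i = 0` once more, the total is `(n - 2).choose k * ∑ ‖x i‖²`, and dividing by
`n.choose (k + 1)` gives the factor `(k + 1) (n - 1 - k) / (n (n - 1))`. Finally
`‖v i • y i‖² ≤ ‖v‖_∞² ‖y i‖²`. -/

open Matrix

namespace Finset

variable {α : Type*} [DecidableEq α] {s : Finset α}

theorem card_filter_mem_notMem_powersetCard {i j : α} (hi : i ∈ s) (hj : j ∈ s) (hij : i ≠ j)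
    (k : ℕ) : #{A ∈ s.powersetCard (k + 1) | i ∈ A ∧ j ∉ A} = (#s - 2).choose k := by
  have hfilter : {A ∈ s.powersetCard (k + 1) | i ∈ A ∧ j ∉ A}
      = {A ∈ (s.erase j).powersetCard (k + 1) | {i} ⊆ A} := by
    ext A
    simp only [mem_filter, mem_powersetCard, subset_erase, singleton_subset_iff]
    tauto
  rw [hfilter, card_filter_powersetCard_subset _ _ _ (by simp [hi, hij]) (by simp),
    card_erase_of_mem hj, card_singleton, Nat.sub_sub, Nat.add_sub_cancel]

theorem sum_mul_sum_sdiff_eq_sum_sum_card_filter {R : Type*} [Semiring R]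
    (𝒜 : Finset (Finset α)) (h𝒜 : ∀ A ∈ 𝒜, A ⊆ s) (a : α → R) :
    ∑ A ∈ 𝒜, (∑ i ∈ A, a i) * ∑ j ∈ s \ A, a j
      = ∑ i ∈ s, ∑ j ∈ s, #{A ∈ 𝒜 | i ∈ A ∧ j ∉ A} * (a i * a j) := by
  have hA : ∀ A ∈ 𝒜, (∑ i ∈ A, a i) * ∑ j ∈ s \ A, a j
      = ∑ i ∈ s, ∑ j ∈ s, if i ∈ A ∧ j ∉ A then a i * a j else 0 := by
    intro A hA
    rw [← inter_eq_right.mpr (h𝒜 A hA), ← filter_mem_eq_inter, ← filter_notMem_eq_sdiff,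
      sum_mul_sum, sum_filter]
    refine sum_congr rfl fun i _ => ?_
    rw [sum_filter]
    split_ifs <;> simp_all
  rw [sum_congr rfl hA, sum_comm]
  refine sum_congr rfl fun i _ => ?_
  rw [sum_comm]
  refine sum_congr rfl fun j _ => ?_
  rw [← sum_filter, sum_const, nsmul_eq_mul]

variable {R : Type*} [CommRing R]

theorem sum_powersetCard_sq_sum_of_sum_eq_zero {a : α → R} (ha : ∑ i ∈ s, a i = 0) (k : ℕ) :
    ∑ A ∈ s.powersetCard (k + 1), (∑ i ∈ A, a i) ^ 2 = (#s - 2).choose k * ∑ i ∈ s, a i ^ 2 := by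
  have hcompl : ∀ A ∈ s.powersetCard (k + 1),
      (∑ i ∈ A, a i) ^ 2 = -((∑ i ∈ A, a i) * ∑ j ∈ s \ A, a j) := by
    intro A hA
    rw [← sum_sdiff (mem_powersetCard.mp hA).1, add_comm] at ha
    rw [eq_neg_of_add_eq_zero_left ha]
    ring
  have hcount : ∀ i ∈ s, ∀ j ∈ s, (#{A ∈ s.powersetCard (k + 1) | i ∈ A ∧ j ∉ A} : R)
      = if i = j then 0 else ((#s - 2).choose k : R) := by
    intro i hi j hj
    split_ifs with hij
    · simp [hij]
    · rw [card_filter_mem_notMem_powersetCard hi hj hij]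
  calc ∑ A ∈ s.powersetCard (k + 1), (∑ i ∈ A, a i) ^ 2
      = -∑ i ∈ s, ∑ j ∈ s, #{A ∈ s.powersetCard (k + 1) | i ∈ A ∧ j ∉ A} * (a i * a j) := by
        rw [sum_congr rfl hcompl, sum_neg_distrib, sum_mul_sum_sdiff_eq_sum_sum_card_filter _
          fun A hA => (mem_powersetCard.mp hA).1]
    _ = -∑ i ∈ s, ∑ j ∈ s, ((#s - 2).choose k * (a i * a j)
          - if i = j then (#s - 2).choose k * (a i * a j) else 0) := by
        congr 1
        refine sum_congr rfl fun i hi => sum_congr rfl fun j hj => ?_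
        rw [hcount i hi j hj]
        split_ifs <;> ring
    _ = (#s - 2).choose k * ∑ i ∈ s, a i ^ 2 := by
        simp [sum_sub_distrib, ← mul_sum, ha, sq]

theorem sum_powersetCard_dotProduct_self_sum_of_sum_eq_zero {m : Type*} [Fintype m]
    {x : α → m → R} (hx : ∑ i ∈ s, x i = 0) (k : ℕ) :
    ∑ A ∈ s.powersetCard (k + 1), (∑ i ∈ A, x i) ⬝ᵥ (∑ i ∈ A, x i)
      = (#s - 2).choose k * ∑ i ∈ s, x i ⬝ᵥ x i := by
  have hcoord (c : m) : ∑ i ∈ s, x i c = 0 := by rw [← sum_apply, hx, Pi.zero_apply]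
  simp only [dotProduct, ← sq, sum_apply]
  rw [sum_comm, sum_comm (s := s), mul_sum]
  exact sum_congr rfl fun c _ => sum_powersetCard_sq_sum_of_sum_eq_zero (hcoord c) k

end Finset

theorem sum_dotProduct_smul_self_le {ι m : Type*} [Fintype ι] [Fintype m] (v : ι → ℝ)
    (Y : Matrix ι m ℝ) :
    ∑ i, (v i • Y i) ⬝ᵥ (v i • Y i) ≤ (⨆ i, |v i|) ^ 2 * ∑ i, ∑ j, Y i j ^ 2 := by
  rw [Finset.mul_sum]
  refine Finset.sum_le_sum fun i _ => ?_
  have hvi : v i ^ 2 ≤ (⨆ i, |v i|) ^ 2 :=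
    sq_le_sq.mpr ((le_ciSup (f := fun i => |v i|) (Set.finite_range _).bddAbove i).trans
      (le_abs_self _))
  calc (v i • Y i) ⬝ᵥ (v i • Y i) = v i ^ 2 * ∑ j, Y i j ^ 2 := by
        rw [smul_dotProduct, dotProduct_smul, smul_eq_mul, smul_eq_mul, ← mul_assoc, ← sq]
        simp only [dotProduct, sq]
    _ ≤ _ := mul_le_mul_of_nonneg_right hvi (Finset.sum_nonneg fun j _ => sq_nonneg _)

theorem Nat.choose_sub_two_div_choose_succ {n k : ℕ} (hn : 2 ≤ n) (hk : k < n) :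
    ((n - 2).choose k : ℝ) / n.choose (k + 1) = (k + 1) * (n - 1 - k) / (n * (n - 1)) := by
  obtain ⟨m, rfl⟩ := Nat.exists_eq_add_of_le' hn
  have h₁ : ((m + 2 : ℕ) : ℝ) * (m + 1).choose k = (m + 2).choose (k + 1) * (k + 1) := by
    exact_mod_cast Nat.add_one_mul_choose_eq (m + 1) k
  have h₂ : (m.choose k : ℝ) * (m + 1) = (m + 1).choose k * (m + 1 - k) := by
    rw [← Nat.cast_add_one, ← Nat.cast_sub (by omega)]
    exact_mod_cast Nat.choose_mul_succ_eq m k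
  have hchoose : ((m + 2).choose (k + 1) : ℝ) ≠ 0 := by
    exact_mod_cast (Nat.choose_pos (by omega)).ne'
  push_cast at h₁ ⊢
  rw [div_eq_div_iff hchoose (by ring_nf; positivity)]
  linear_combination (m + 2 : ℝ) * h₂ + (m + 1 - k : ℝ) * h₁

theorem swor_second_moment_vY_general (n d t : ℕ) (ht1 : 1 ≤ t) (htn : t ≤ n)
    (Y : Matrix (Fin n) (Fin d) ℝ) (v : Fin n → ℝ)
    (hvY : v ᵥ* Y = 0) :
    (∑ A ∈ Finset.powersetCard (n - t + 1) (Finset.univ : Finset (Fin n)),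
        (∑ i ∈ A, v i • Y i) ⬝ᵥ (∑ i ∈ A, v i • Y i)) /
      (Finset.powersetCard (n - t + 1) (Finset.univ : Finset (Fin n))).card ≤
    (((n : ℝ) - t + 1) * ((t : ℝ) - 1) / ((n : ℝ) * ((n : ℝ) - 1))) *
      (⨆ i, |v i|) ^ 2 * ∑ i, ∑ j, Y i j ^ 2 := by
  have hx : ∑ i, v i • Y i = 0 := by rwa [← vecMul_eq_sum]
  rw [Finset.sum_powersetCard_dotProduct_self_sum_of_sum_eq_zero hx, Finset.card_powersetCard,
    Finset.card_fin]
  obtain hn | hn := lt_or_ge n 2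
  · -- `n = 1`: the coefficient is `0 / 0 = 0`, and the only summand `v 0 • Y 0` vanishes.
    obtain rfl : n = 1 := by omega
    rw [Fin.sum_univ_one] at hx
    simp only [Fin.sum_univ_one, hx, zero_dotProduct, mul_zero, zero_div]
    simp
  have hcoef : ((n - 2).choose (n - t) : ℝ) / n.choose (n - t + 1)
      = ((n : ℝ) - t + 1) * ((t : ℝ) - 1) / ((n : ℝ) * ((n : ℝ) - 1)) := by
    rw [Nat.choose_sub_two_div_choose_succ hn (by omega), Nat.cast_sub htn]
    ring
  have hcoef_nonneg : 0 ≤ ((n : ℝ) - t + 1) * ((t : ℝ) - 1) / ((n : ℝ) * ((n : ℝ) - 1)) := by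
    have ht1' : (1 : ℝ) ≤ t := by exact_mod_cast ht1
    have htn' : (t : ℝ) ≤ n := by exact_mod_cast htn
    exact div_nonneg (mul_nonneg (by linarith) (by linarith))
      (mul_nonneg (by linarith) (by linarith))
  rw [mul_div_right_comm, hcoef, mul_assoc]
  exact mul_le_mul_of_nonneg_left (sum_dotProduct_smul_self_le v Y) hcoef_nonneg

/-- Second moment bound: for `v` with `vᵀY = 0` and a uniformly random subset
`A` of size `n - t + 1`, `E[‖v[A]ᵀ Y[A,:]‖²] ≤ ((n-t+1)(t-1)/(n(n-1))) ‖v‖_∞² ‖Y‖_F²`. -/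
theorem swor_second_moment_vY (n d t : ℕ) (ht1 : 1 ≤ t) (htn : t ≤ n)
    (Y : Matrix (Fin n) (Fin d) ℝ) (v : Fin n → ℝ) (ζ : ℝ)
    (hrow : ∀ i, Real.sqrt (Y i ⬝ᵥ Y i) ≤ ζ)
    (hvY : v ᵥ* Y = 0) :
    (∑ A ∈ Finset.powersetCard (n - t + 1) (Finset.univ : Finset (Fin n)),
        (∑ i ∈ A, v i • Y i) ⬝ᵥ (∑ i ∈ A, v i • Y i)) /
      (Finset.powersetCard (n - t + 1) (Finset.univ : Finset (Fin n))).card ≤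
    (((n : ℝ) - t + 1) * ((t : ℝ) - 1) / ((n : ℝ) * ((n : ℝ) - 1))) *
      (⨆ i, |v i|) ^ 2 * ∑ i, ∑ j, Y i j ^ 2 :=
  swor_second_moment_vY_general n d t ht1 htn Y v hvY
end

section
/- Let v ∈ ℝ^n with v^T Y = 0 for an n×d real matrix Y with rows of norm at most ζ, and let A be a uniformly random subset of [n] of size n−t+1 with n ≥ 4. Then E[‖v[A]^T Y[A,:]‖⁴] ≤ C d ‖v‖_∞⁴ ( ((n−t+1)²(t−1)²/n⁴) ‖Y‖_Frob⁴ + ((n−t+1)(t−1)/n²) ζ² ‖Y‖_Frob² ) for an absolute constant C. -/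
open Matrix Finset

/-!
Write `w_A = ∑_{i ∈ A} v_i Y_i`. Cauchy–Schwarz over the `d` columns gives
`‖w_A‖⁴ ≤ d ∑_c S_c(A)⁴` with `S_c(A) = ∑_{i ∈ A} a_i`, `a_i = v_i Y_{ic}`, and `∑_i a_i = 0`
because `vᵀY = 0`. Expanding `S(A)⁴` and counting the `r`-subsets that contain `{i, j, k, l}`
turns the sum over `A` into `∑_{i,j,k,l} a_i a_j a_k a_l D(|{i,j,k,l}|)` with
`D(c) = C(n - c, r - c)`. Summing out one index at a time with `∑ a = 0` replaces `D` by its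
difference `D(c) - D(c + 1)`, which leaves the exact formula
`(D₁ - 7D₂ + 12D₃ - 6D₄) ∑ a⁴ + 3 (D₂ - 2D₃ + D₄) (∑ a²)²`.
Since `D` is antitone with `D₁ = C(n,r) r/n` and `D₂ ≤ C(n,r) r²/n²`, this is at most
`C(n,r) (13 (r/n) ∑ a⁴ + 6 (r/n)² (∑ a²)²)`; passing to complements (`S(Aᶜ) = -S(A)`) we may
take `2r ≤ n`, where `r/n ≤ 2 r(n - r)/n²`.
-/

-- The `if` matters: for `c > r` the truncated `r - c` would give `choose _ 0 = 1`.
def supersetCount (n r c : ℕ) : ℕ := if c ≤ r then (n - c).choose (r - c) else 0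

section Combinatorics

variable {ι : Type*} [Fintype ι] [DecidableEq ι]

theorem card_filter_powersetCard_superset (r : ℕ) (s : Finset ι) :
    #((powersetCard r (univ : Finset ι)).filter (s ⊆ ·)) =
      supersetCount (Fintype.card ι) r #s := by
  unfold supersetCount
  split_ifs with h
  · rw [card_filter_powersetCard_subset s univ r (subset_univ s) h, card_univ]
  · refine card_eq_zero.2 (filter_eq_empty_iff.2 fun A hA hsA => h ?_)
    exact (card_le_card hsA).trans_eq (mem_powersetCard_univ.1 hA)

theorem supersetCount_mul_choose (n r c : ℕ) :
    supersetCount n r c * n.choose c = n.choose r * r.choose c := by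
  unfold supersetCount
  split_ifs with h
  · rw [mul_comm, Nat.choose_mul h]
  · rw [Nat.choose_eq_zero_of_lt (not_le.1 h), zero_mul, mul_zero]

theorem supersetCount_antitone {n r : ℕ} (hr : r ≤ n) : Antitone (supersetCount n r) := by
  refine antitone_nat_of_succ_le fun c => ?_
  unfold supersetCount
  split_ifs with h₁ h₂
  · obtain ⟨m, hm⟩ : ∃ m, n - c = m + 1 := ⟨n - c - 1, by omega⟩
    rw [hm, show n - (c + 1) = m by omega, show r - c = r - (c + 1) + 1 by omega,
      Nat.choose_succ_succ]
    exact Nat.le_add_right _ _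
  · omega
  · exact Nat.zero_le _
  · exact le_rfl

theorem sum_powersetCard_sum_pow_four {R : Type*} [CommRing R] (r : ℕ) (a : ι → R) :
    ∑ A ∈ powersetCard r (univ : Finset ι), (∑ i ∈ A, a i) ^ 4 =
      ∑ l, ∑ k, ∑ j, ∑ i, a i * a j * a k * a l *
        supersetCount (Fintype.card ι) r #{i, j, k, l} := by
  have expand : ∀ A : Finset ι, (∑ i ∈ A, a i) ^ 4 = ∑ l, ∑ k, ∑ j, ∑ i,
      if {i, j, k, l} ⊆ A then a i * a j * a k * a l else 0 := by
    intro A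
    rw [← univ_inter A, ← sum_ite_mem, show ∀ x : R, x ^ 4 = x * x * x * x by intro x; ring]
    simp only [mul_sum, sum_mul]
    refine sum_congr rfl fun l _ => sum_congr rfl fun k _ => sum_congr rfl fun j _ =>
      sum_congr rfl fun i _ => ?_
    simp only [insert_subset_iff, singleton_subset_iff, mem_inter, mem_univ, true_and]
    split_ifs <;> simp_all
  simp only [expand]
  rw [sum_comm]
  refine sum_congr rfl fun l _ => ?_
  rw [sum_comm]
  refine sum_congr rfl fun k _ => ?_
  rw [sum_comm]
  refine sum_congr rfl fun j _ => ?_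
  rw [sum_comm]
  refine sum_congr rfl fun i _ => ?_
  rw [← sum_filter, sum_const, card_filter_powersetCard_superset, nsmul_eq_mul, mul_comm]

end Combinatorics

section FiniteDifferences

variable {ι R : Type*} [Fintype ι] [DecidableEq ι] [CommRing R]

theorem sum_eq_sum_add_sum_sub_of_notMem (s : Finset ι) {f g : ι → R}
    (h : ∀ i ∉ s, f i = g i) : ∑ i, f i = ∑ i, g i + ∑ i ∈ s, (f i - g i) := by
  rw [← sum_add_sum_compl s f, ← sum_add_sum_compl s g,
    sum_congr rfl fun i hi => h i (mem_compl.1 hi), sum_sub_distrib]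
  ring

variable {a : ι → R}

theorem sum_mul_apply_card_insert (ha : ∑ i, a i = 0) (g : ℕ → R) (s : Finset ι) :
    ∑ l, a l * g #(insert l s) = (g #s - g (#s + 1)) * ∑ x ∈ s, a x := by
  rw [sum_eq_sum_add_sum_sub_of_notMem s (g := fun l => a l * g (#s + 1))
    fun l hl => by rw [card_insert_of_notMem hl], ← sum_mul, ha, zero_mul, zero_add, mul_sum]
  exact sum_congr rfl fun x hx => by rw [insert_eq_of_mem hx]; ring

theorem sum_mul_apply_card_insert_mul_sum (ha : ∑ i, a i = 0) (g : ℕ → R) (s : Finset ι) :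
    ∑ k, a k * (g #(insert k s) * ∑ x ∈ insert k s, a x) =
      g #s * (∑ x ∈ s, a x) ^ 2 +
        g (#s + 1) * (∑ x, a x ^ 2 - ∑ x ∈ s, a x ^ 2 - (∑ x ∈ s, a x) ^ 2) := by
  set S := ∑ x ∈ s, a x
  have h_mem : ∀ k ∈ s, a k * (g #(insert k s) * ∑ x ∈ insert k s, a x) -
      (g (#s + 1) * a k ^ 2 + g (#s + 1) * S * a k) =
        (g #s - g (#s + 1)) * S * a k - g (#s + 1) * a k ^ 2 :=
    fun k hk => by rw [insert_eq_of_mem hk]; ring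
  rw [sum_eq_sum_add_sum_sub_of_notMem s
      (g := fun k => g (#s + 1) * a k ^ 2 + g (#s + 1) * S * a k) fun k hk => by
      rw [card_insert_of_notMem hk, sum_insert hk]; ring,
    sum_congr rfl h_mem, sum_add_distrib, sum_sub_distrib, ← mul_sum, ← mul_sum, ← mul_sum,
    ← mul_sum, ha]
  ring

theorem sum_mul_apply_card_pair (ha : ∑ i, a i = 0) (g : ℕ → R) (l : ι) :
    ∑ k, a k * (g #{k, l} * (∑ x ∈ {k, l}, a x) ^ 2 +
        g (#{k, l} + 1) * (∑ x, a x ^ 2 - ∑ x ∈ {k, l}, a x ^ 2 - (∑ x ∈ {k, l}, a x) ^ 2)) =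
      (g 1 - 6 * g 2 + 6 * g 3) * a l ^ 3 + 3 * (g 2 - g 3) * (∑ x, a x ^ 2) * a l +
        (g 2 - 2 * g 3) * ∑ x, a x ^ 3 := by
  set Q := ∑ x, a x ^ 2
  rw [sum_eq_sum_add_sum_sub_of_notMem {l}
    (g := fun k => (g 2 * a l ^ 2 + g 3 * (Q - 2 * a l ^ 2)) * a k +
      2 * (g 2 - g 3) * a l * a k ^ 2 + (g 2 - 2 * g 3) * a k ^ 3)
    fun k hk => ?_]
  · rw [sum_add_distrib, sum_add_distrib, ← mul_sum, ← mul_sum, ← mul_sum, ha, sum_singleton,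
      pair_eq_singleton, card_singleton, sum_singleton, sum_singleton]
    ring
  · have hkl : k ∉ ({l} : Finset ι) := hk
    rw [card_insert_of_notMem hkl, card_singleton, sum_insert hkl, sum_insert hkl, sum_singleton,
      sum_singleton]
    ring

theorem sum_quartic_mul_apply_card (ha : ∑ i, a i = 0) (g : ℕ → R) :
    ∑ l, ∑ k, ∑ j, ∑ i, a i * a j * a k * a l * g #{i, j, k, l} =
      (g 1 - 7 * g 2 + 12 * g 3 - 6 * g 4) * ∑ i, a i ^ 4 +
        3 * (g 2 - 2 * g 3 + g 4) * (∑ i, a i ^ 2) ^ 2 := by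
  set Δg : ℕ → R := fun c => g c - g (c + 1)
  calc ∑ l, ∑ k, ∑ j, ∑ i, a i * a j * a k * a l * g #{i, j, k, l}
      = ∑ l, ∑ k, ∑ j, a j * a k * a l * (Δg #{j, k, l} * ∑ x ∈ {j, k, l}, a x) := by
        refine sum_congr rfl fun l _ => sum_congr rfl fun k _ => sum_congr rfl fun j _ => ?_
        rw [← sum_mul_apply_card_insert ha, mul_sum]
        exact sum_congr rfl fun i _ => by ring
    _ = ∑ l, ∑ k, a k * a l * (Δg #{k, l} * (∑ x ∈ {k, l}, a x) ^ 2 +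
          Δg (#{k, l} + 1) *
            (∑ x, a x ^ 2 - ∑ x ∈ {k, l}, a x ^ 2 - (∑ x ∈ {k, l}, a x) ^ 2)) := by
        refine sum_congr rfl fun l _ => sum_congr rfl fun k _ => ?_
        rw [← sum_mul_apply_card_insert_mul_sum ha, mul_sum]
        exact sum_congr rfl fun j _ => by ring
    _ = ∑ l, a l * ((Δg 1 - 6 * Δg 2 + 6 * Δg 3) * a l ^ 3 +
          3 * (Δg 2 - Δg 3) * (∑ x, a x ^ 2) * a l + (Δg 2 - 2 * Δg 3) * ∑ x, a x ^ 3) := by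
        refine sum_congr rfl fun l _ => ?_
        rw [← sum_mul_apply_card_pair ha, mul_sum]
        exact sum_congr rfl fun k _ => by ring
    _ = _ := by
        have h_expand : ∀ l, a l * ((Δg 1 - 6 * Δg 2 + 6 * Δg 3) * a l ^ 3 +
            3 * (Δg 2 - Δg 3) * (∑ x, a x ^ 2) * a l + (Δg 2 - 2 * Δg 3) * ∑ x, a x ^ 3) =
              (Δg 1 - 6 * Δg 2 + 6 * Δg 3) * a l ^ 4 +
                3 * (Δg 2 - Δg 3) * (∑ x, a x ^ 2) * a l ^ 2 +
                  (Δg 2 - 2 * Δg 3) * (∑ x, a x ^ 3) * a l := fun l => by ring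
        rw [sum_congr rfl fun l _ => h_expand l, sum_add_distrib, sum_add_distrib, ← mul_sum,
          ← mul_sum, ← mul_sum, ha]
        ring

end FiniteDifferences

section Bounds

variable {ι : Type*} [Fintype ι] [DecidableEq ι]

theorem supersetCount_one_mul (n r : ℕ) : supersetCount n r 1 * n = n.choose r * r := by
  simpa using supersetCount_mul_choose n r 1

theorem supersetCount_two_mul_sq_le {n r : ℕ} (hr : r ≤ n) :
    (supersetCount n r 2 : ℝ) * n ^ 2 ≤ n.choose r * r ^ 2 := by
  have h := congrArg (Nat.cast : ℕ → ℝ) (supersetCount_mul_choose n r 2)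
  push_cast [Nat.cast_choose_two] at h
  rcases Nat.lt_or_ge r 2 with hr2 | hr2
  · simp only [supersetCount, if_neg (Nat.not_le.2 hr2), Nat.cast_zero, zero_mul]
    positivity
  · have hrn : (r : ℝ) ≤ n := by exact_mod_cast hr
    have hr2' : (2 : ℝ) ≤ r := by exact_mod_cast hr2
    have hCr : (0 : ℝ) ≤ n.choose r * r * (n - r) := by
      have : (0 : ℝ) ≤ n - r := sub_nonneg.2 hrn
      positivity
    refine le_of_mul_le_mul_left ?_ (by linarith : (0 : ℝ) < n - 1)
    nlinarith [congrArg (· * (2 * n : ℝ)) h]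

theorem sq_mul_sum_powersetCard_sum_pow_four_le {r : ℕ} (hr : r ≤ Fintype.card ι) {a : ι → ℝ}
    (ha : ∑ i, a i = 0) :
    (Fintype.card ι : ℝ) ^ 2 * ∑ A ∈ powersetCard r (univ : Finset ι), (∑ i ∈ A, a i) ^ 4 ≤
      (Fintype.card ι).choose r *
        (13 * r * Fintype.card ι * ∑ i, a i ^ 4 + 6 * r ^ 2 * (∑ i, a i ^ 2) ^ 2) := by
  set n := Fintype.card ι
  set D : ℕ → ℝ := fun c => supersetCount n r c
  have hD : Antitone D := fun b c h => Nat.cast_le.2 (supersetCount_antitone hr h)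
  have hD0 : ∀ c, 0 ≤ D c := fun c => Nat.cast_nonneg _
  have hD1 : D 1 * n = n.choose r * r := by simp only [D]; exact_mod_cast supersetCount_one_mul n r
  have hD2 : D 2 * n ^ 2 ≤ n.choose r * r ^ 2 := supersetCount_two_mul_sq_le hr
  have hc₁ : D 1 - 7 * D 2 + 12 * D 3 - 6 * D 4 ≤ 13 * D 1 := by
    linarith [hD (show 1 ≤ 3 by norm_num), hD0 2, hD0 4]
  have hc₂ : 3 * (D 2 - 2 * D 3 + D 4) ≤ 6 * D 2 := by
    linarith [hD (show 2 ≤ 4 by norm_num), hD0 3]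
  have hP : 0 ≤ ∑ i, a i ^ 4 := by positivity
  have hQ : 0 ≤ (∑ i, a i ^ 2) ^ 2 := by positivity
  rw [sum_powersetCard_sum_pow_four, sum_quartic_mul_apply_card ha D]
  calc (n : ℝ) ^ 2 * ((D 1 - 7 * D 2 + 12 * D 3 - 6 * D 4) * ∑ i, a i ^ 4 +
        3 * (D 2 - 2 * D 3 + D 4) * (∑ i, a i ^ 2) ^ 2)
      ≤ n ^ 2 * (13 * D 1 * ∑ i, a i ^ 4 + 6 * D 2 * (∑ i, a i ^ 2) ^ 2) := by gcongr
    _ = 13 * n * (D 1 * n) * ∑ i, a i ^ 4 + 6 * (D 2 * n ^ 2) * (∑ i, a i ^ 2) ^ 2 := by ring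
    _ ≤ _ := by rw [hD1]; nlinarith [mul_le_mul_of_nonneg_right hD2 hQ]

theorem sum_powersetCard_card_sub {β : Type*} [AddCommMonoid β] {r : ℕ}
    (hr : r ≤ Fintype.card ι) (f : Finset ι → β) :
    ∑ A ∈ powersetCard (Fintype.card ι - r) (univ : Finset ι), f A =
      ∑ A ∈ powersetCard r (univ : Finset ι), f Aᶜ := by
  refine sum_nbij' (fun A => Aᶜ) (fun A => Aᶜ) (fun A hA => ?_) (fun A hA => ?_)
    (fun A _ => compl_compl A) (fun A _ => compl_compl A) (fun A _ => by rw [compl_compl])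
  · rw [mem_powersetCard_univ] at hA ⊢
    rw [card_compl, hA]
    omega
  · rw [mem_powersetCard_univ] at hA ⊢
    rw [card_compl, hA]

theorem pow_four_mul_sum_powersetCard_sum_pow_four_le {r : ℕ} (hr : r ≤ Fintype.card ι)
    {a : ι → ℝ} (ha : ∑ i, a i = 0) :
    (Fintype.card ι : ℝ) ^ 4 * ∑ A ∈ powersetCard r (univ : Finset ι), (∑ i ∈ A, a i) ^ 4 ≤
      26 * (Fintype.card ι).choose r *
        (r * (Fintype.card ι - r) * Fintype.card ι ^ 2 * ∑ i, a i ^ 4 +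
          (r * (Fintype.card ι - r)) ^ 2 * (∑ i, a i ^ 2) ^ 2) := by
  set n := Fintype.card ι
  wlog h : 2 * r ≤ n generalizing r with H
  · have hsym := H (r := n - r) (Nat.sub_le n r) (by omega)
    have hcompl : ∀ A : Finset ι, (∑ i ∈ Aᶜ, a i) ^ 4 = (∑ i ∈ A, a i) ^ 4 := fun A => by
      rw [← neg_eq_of_add_eq_zero_right ((sum_add_sum_compl A a).trans ha), neg_pow,
        Even.neg_one_pow (by decide), one_mul]
    rw [sum_powersetCard_card_sub hr, sum_congr rfl fun A _ => hcompl A, Nat.choose_symm hr,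
      Nat.cast_sub hr, sub_sub_cancel] at hsym
    linarith
  have hrn : (2 * r : ℝ) ≤ n := by exact_mod_cast h
  have hr0 : (0 : ℝ) ≤ r := Nat.cast_nonneg r
  have h₁ : 13 * r * n * (n : ℝ) ^ 2 ≤ 26 * (r * (n - r) * n ^ 2) := by
    nlinarith [mul_nonneg (mul_nonneg hr0 (sq_nonneg (n : ℝ))) (sub_nonneg.2 hrn)]
  have h₂ : 6 * (r : ℝ) ^ 2 * n ^ 2 ≤ 26 * (r * (n - r)) ^ 2 := by
    nlinarith [mul_nonneg (sq_nonneg (r : ℝ)) (sub_nonneg.2 hrn)]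
  calc (n : ℝ) ^ 4 * ∑ A ∈ powersetCard r (univ : Finset ι), (∑ i ∈ A, a i) ^ 4
      = n ^ 2 * (n ^ 2 * ∑ A ∈ powersetCard r (univ : Finset ι), (∑ i ∈ A, a i) ^ 4) := by ring
    _ ≤ n ^ 2 * (n.choose r * (13 * r * n * ∑ i, a i ^ 4 + 6 * r ^ 2 * (∑ i, a i ^ 2) ^ 2)) :=
      mul_le_mul_of_nonneg_left (sq_mul_sum_powersetCard_sum_pow_four_le hr ha) (by positivity)
    _ = n.choose r * (13 * r * n * n ^ 2 * ∑ i, a i ^ 4 +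
          6 * r ^ 2 * n ^ 2 * (∑ i, a i ^ 2) ^ 2) := by ring
    _ ≤ n.choose r * (26 * (r * (n - r) * n ^ 2) * ∑ i, a i ^ 4 +
          26 * (r * (n - r)) ^ 2 * (∑ i, a i ^ 2) ^ 2) := by gcongr
    _ = _ := by ring

end Bounds

section WeightedRows

variable {ι κ : Type*} [Fintype ι] [Fintype κ]

theorem sq_dotProduct_self_le (x : κ → ℝ) :
    (x ⬝ᵥ x) ^ 2 ≤ Fintype.card κ * ∑ c, x c ^ 4 := by
  have h := sq_sum_le_card_mul_sum_sq (s := univ) (f := fun c => x c ^ 2)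
  simp only [← pow_mul, card_univ] at h
  simpa [dotProduct, ← sq] using h

variable {v : ι → ℝ} {Y : Matrix ι κ ℝ} {M ζ : ℝ}

theorem sum_sum_mul_pow_four_le (hv : ∀ i, |v i| ≤ M) (hY : ∀ i, ∑ c, Y i c ^ 2 ≤ ζ ^ 2) :
    ∑ c, ∑ i, (v i * Y i c) ^ 4 ≤ M ^ 4 * ζ ^ 2 * ∑ i, ∑ c, Y i c ^ 2 := by
  rw [sum_comm, mul_sum]
  refine sum_le_sum fun i _ => ?_
  have hv4 : v i ^ 4 ≤ M ^ 4 := by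
    simpa [← abs_pow, Even.pow_abs (by decide : Even 4)] using
      pow_le_pow_left₀ (abs_nonneg _) (hv i) 4
  have hY4 : ∀ c, Y i c ^ 4 ≤ ζ ^ 2 * Y i c ^ 2 := fun c => by
    have := (single_le_sum (fun c _ => sq_nonneg (Y i c)) (mem_univ c)).trans (hY i)
    nlinarith [sq_nonneg (Y i c)]
  calc ∑ c, (v i * Y i c) ^ 4 = v i ^ 4 * ∑ c, Y i c ^ 4 := by rw [mul_sum]; simp only [mul_pow]
    _ ≤ M ^ 4 * ∑ c, ζ ^ 2 * Y i c ^ 2 := by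
        gcongr with c
        exact hY4 c
    _ = M ^ 4 * ζ ^ 2 * ∑ c, Y i c ^ 2 := by rw [← mul_sum, mul_assoc]

theorem sum_sq_sum_mul_sq_le (hv : ∀ i, |v i| ≤ M) :
    ∑ c, (∑ i, (v i * Y i c) ^ 2) ^ 2 ≤ M ^ 4 * (∑ i, ∑ c, Y i c ^ 2) ^ 2 := by
  have hv2 : ∀ i, v i ^ 2 ≤ M ^ 2 := fun i => by
    simpa [sq_abs] using pow_le_pow_left₀ (abs_nonneg _) (hv i) 2
  calc ∑ c, (∑ i, (v i * Y i c) ^ 2) ^ 2 ≤ (∑ c, ∑ i, (v i * Y i c) ^ 2) ^ 2 :=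
        sum_sq_le_sq_sum_of_nonneg fun c _ => by positivity
    _ ≤ (∑ c, ∑ i, M ^ 2 * Y i c ^ 2) ^ 2 := by
        gcongr with c _ i _
        rw [mul_pow]
        exact mul_le_mul_of_nonneg_right (hv2 i) (sq_nonneg _)
    _ = M ^ 4 * (∑ i, ∑ c, Y i c ^ 2) ^ 2 := by
        rw [sum_comm]; simp only [← mul_sum]; ring

theorem pow_four_mul_sum_powersetCard_sq_dotProduct_le [DecidableEq ι] {r : ℕ}
    (hr : r ≤ Fintype.card ι) (hvY : v ᵥ* Y = 0) (hv : ∀ i, |v i| ≤ M)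
    (hY : ∀ i, ∑ c, Y i c ^ 2 ≤ ζ ^ 2) :
    (Fintype.card ι : ℝ) ^ 4 * ∑ A ∈ powersetCard r (univ : Finset ι),
        ((∑ i ∈ A, v i • Y i) ⬝ᵥ (∑ i ∈ A, v i • Y i)) ^ 2 ≤
      26 * (Fintype.card ι).choose r * Fintype.card κ * M ^ 4 *
        ((r * (Fintype.card ι - r)) ^ 2 * (∑ i, ∑ c, Y i c ^ 2) ^ 2 +
          r * (Fintype.card ι - r) * Fintype.card ι ^ 2 * ζ ^ 2 * ∑ i, ∑ c, Y i c ^ 2) := by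
  set n := Fintype.card ι
  set σ : ℝ := r * (n - r)
  have hcol : ∀ c, ∑ i, v i * Y i c = 0 := fun c => by
    simpa [vecMul, dotProduct] using congrFun hvY c
  have hσ : 0 ≤ σ := mul_nonneg (Nat.cast_nonneg r) (sub_nonneg.2 (by exact_mod_cast hr))
  calc (n : ℝ) ^ 4 * ∑ A ∈ powersetCard r (univ : Finset ι),
        ((∑ i ∈ A, v i • Y i) ⬝ᵥ (∑ i ∈ A, v i • Y i)) ^ 2
      ≤ n ^ 4 * ∑ A ∈ powersetCard r (univ : Finset ι),
          Fintype.card κ * ∑ c, (∑ i ∈ A, v i * Y i c) ^ 4 := by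
        gcongr with A
        simpa [Finset.sum_apply] using sq_dotProduct_self_le (∑ i ∈ A, v i • Y i)
    _ = Fintype.card κ * ∑ c, n ^ 4 * ∑ A ∈ powersetCard r (univ : Finset ι),
          (∑ i ∈ A, v i * Y i c) ^ 4 := by
        simp only [mul_sum]
        rw [sum_comm]
        exact sum_congr rfl fun c _ => sum_congr rfl fun A _ => by ring
    _ ≤ Fintype.card κ * ∑ c, 26 * n.choose r *
          (σ * n ^ 2 * ∑ i, (v i * Y i c) ^ 4 + σ ^ 2 * (∑ i, (v i * Y i c) ^ 2) ^ 2) := by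
        refine mul_le_mul_of_nonneg_left (sum_le_sum fun c _ => ?_) (Nat.cast_nonneg _)
        exact pow_four_mul_sum_powersetCard_sum_pow_four_le hr (hcol c)
    _ = 26 * n.choose r * Fintype.card κ * (σ * n ^ 2 * ∑ c, ∑ i, (v i * Y i c) ^ 4 +
          σ ^ 2 * ∑ c, (∑ i, (v i * Y i c) ^ 2) ^ 2) := by
        rw [← mul_sum, sum_add_distrib, ← mul_sum, ← mul_sum]; ring
    _ ≤ 26 * n.choose r * Fintype.card κ * (σ * n ^ 2 * (M ^ 4 * ζ ^ 2 * ∑ i, ∑ c, Y i c ^ 2) +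
          σ ^ 2 * (M ^ 4 * (∑ i, ∑ c, Y i c ^ 2) ^ 2)) := by
        gcongr
        · exact sum_sum_mul_pow_four_le hv hY
        · exact sum_sq_sum_mul_sq_le hv
    _ = _ := by ring

end WeightedRows

/-- Fourth moment bound with an absolute constant `C`: for `v` with `vᵀY = 0`,
rows of `Y` of norm at most `ζ`, and a uniformly random subset `A` of size
`n - t + 1`, `E[‖v[A]ᵀ Y[A,:]‖⁴] ≤ C d ‖v‖_∞⁴ ( ((n-t+1)²(t-1)²/n⁴)‖Y‖_F⁴
+ ((n-t+1)(t-1)/n²) ζ² ‖Y‖_F² )`. -/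
theorem swor_fourth_moment_vY :
    ∃ C : ℝ, 0 < C ∧ ∀ (n d t : ℕ), 1 ≤ t → t ≤ n → 4 ≤ n →
      ∀ (Y : Matrix (Fin n) (Fin d) ℝ) (v : Fin n → ℝ) (ζ : ℝ),
        (∀ i, Real.sqrt (Y i ⬝ᵥ Y i) ≤ ζ) → v ᵥ* Y = 0 →
        (∑ A ∈ Finset.powersetCard (n - t + 1) (Finset.univ : Finset (Fin n)),
            ((∑ i ∈ A, v i • Y i) ⬝ᵥ (∑ i ∈ A, v i • Y i)) ^ 2) /
          (Finset.powersetCard (n - t + 1) (Finset.univ : Finset (Fin n))).card ≤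
        C * d * (⨆ i, |v i|) ^ 4 *
          ((((n : ℝ) - t + 1) ^ 2 * ((t : ℝ) - 1) ^ 2 / (n : ℝ) ^ 4) *
              (∑ i, ∑ j, Y i j ^ 2) ^ 2 +
            (((n : ℝ) - t + 1) * ((t : ℝ) - 1) / (n : ℝ) ^ 2) * ζ ^ 2 *
              (∑ i, ∑ j, Y i j ^ 2)) := by
  refine ⟨26, by norm_num, fun n d t ht htn hn Y v ζ hζ hvY => ?_⟩
  have hM : ∀ i, |v i| ≤ ⨆ i, |v i| := le_ciSup (Set.finite_range _).bddAbove
  have hY : ∀ i, ∑ j, Y i j ^ 2 ≤ ζ ^ 2 := fun i => by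
    simpa [dotProduct, sq] using (Real.sqrt_le_iff.1 (hζ i)).2
  have hbound := pow_four_mul_sum_powersetCard_sq_dotProduct_le (r := n - t + 1)
    (by rw [Fintype.card_fin]; omega) hvY hM hY
  have hk : ((n - t + 1 : ℕ) : ℝ) = n - t + 1 := by push_cast [Nat.cast_sub htn]; ring
  have hn0 : (0 : ℝ) < n := by exact_mod_cast (by omega : 0 < n)
  simp only [Fintype.card_fin, hk] at hbound
  rw [card_powersetCard, card_univ, Fintype.card_fin,
    div_le_iff₀ (by exact_mod_cast Nat.choose_pos (by omega)),
    ← mul_le_mul_iff_of_pos_left (pow_pos hn0 4)]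
  refine hbound.trans_eq ?_
  field_simp
  ring
end

section
/- With π, H, and T_n = Σ_j v_j² H(π^{-1}(j)) as above, Var[T_n] ≤ ‖v‖⁴ ( (‖v‖_∞²/‖v‖²)(log(en))² + 1/(n−1) ) for n ≥ 2. -/
/-!
With `b i = H(i + 1) - 1` we have `∑ b = 0` (as `∑ᵢ H(i + 1) = n`) and `Tₙ - 𝔼 Tₙ = ∑ⱼ vⱼ² b(π⁻¹ j)`.
By exchangeability `𝔼[b(π j) b(π k)]` takes one value on the diagonal, `(1/n) ∑ b²`, and one off
it, and the constraint `∑ₖ b(π k) = 0` forces the latter to be `-1/(n - 1)` times the former.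
This is Hoeffding's formula `Var Tₙ = (∑ b²) (n ∑ vⱼ⁴ - ‖v‖⁴) / (n (n - 1)) ≤ (1/n) (∑ b²) ∑ vⱼ⁴`.
Finally `0 ≤ H ≤ H(n) ≤ log(en)` gives `(1/n) ∑ b² ≤ (1/n) ∑ H² ≤ log(en)²`, and
`∑ vⱼ⁴ ≤ ‖v‖_∞² ‖v‖²`.
-/

open Finset

namespace Equiv.Perm

variable {ι M : Type*} [Fintype ι] [DecidableEq ι] [AddCommMonoid M]

theorem sum_comp_apply_eq (f : ι → M) (j k : ι) :
    ∑ π : Perm ι, f (π j) = ∑ π : Perm ι, f (π k) :=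
  Fintype.sum_equiv (Equiv.mulRight (swap j k)) _ _ fun π => by simp

theorem card_smul_sum_comp_apply (f : ι → M) (j : ι) :
    Fintype.card ι • ∑ π : Perm ι, f (π j) = Fintype.card (Perm ι) • ∑ i, f i := calc
  Fintype.card ι • ∑ π : Perm ι, f (π j) = ∑ k, ∑ π : Perm ι, f (π k) := by
    simp [sum_comp_apply_eq f _ j]
  _ = ∑ π : Perm ι, ∑ i, f i := by
    rw [Finset.sum_comm]
    exact Finset.sum_congr rfl fun π _ => Equiv.sum_comp π f
  _ = _ := by simp

theorem sum_comp_apply₂_eq (f : ι → ι → M) {j k j' k' : ι} (hjk : j ≠ k) (hjk' : j' ≠ k') :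
    ∑ π : Perm ι, f (π j) (π k) = ∑ π : Perm ι, f (π j') (π k') := by
  set τ := swap j j'
  have hτ : τ k' ≠ j := by simpa [τ, swap_apply_eq_iff] using hjk'.symm
  set σ := swap (τ k') k * τ
  have hσj : σ j' = j := by
    simp [σ, τ, swap_apply_of_ne_of_ne hτ.symm hjk]
  have hσk : σ k' = k := by simp [σ]
  exact Fintype.sum_equiv (Equiv.mulRight σ) _ _ fun π => by simp [hσj, hσk]

theorem card_mul_sum_comp_apply_mul_comp_apply (b : ι → ℝ) (hb : ∑ i, b i = 0) (j k : ι) :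
    (Fintype.card ι : ℝ) * (Fintype.card ι - 1) * ∑ π : Perm ι, b (π j) * b (π k) =
      Fintype.card (Perm ι) * (∑ i, b i ^ 2) *
        (if j = k then (Fintype.card ι : ℝ) - 1 else -1) := by
  set C : ι → ι → ℝ := fun j k => ∑ π : Perm ι, b (π j) * b (π k)
  have hdiag : ∀ j, (Fintype.card ι : ℝ) * C j j = Fintype.card (Perm ι) * ∑ i, b i ^ 2 :=
    fun j => by
      simp only [C, ← sq]
      simpa using card_smul_sum_comp_apply (fun i => b i ^ 2) j
  have hrow : ∀ j, ∑ k, C j k = 0 := fun j => by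
    simp only [C]
    rw [Finset.sum_comm]
    simp [← Finset.mul_sum, Equiv.sum_comp _ b, hb]
  show _ * _ * C j k = _
  split_ifs with hjk
  · subst hjk; rw [mul_right_comm, hdiag]
  · have hoff : ((Fintype.card ι : ℝ) - 1) * C j k = - C j j := by
      have := hrow j
      rw [← Finset.add_sum_erase _ _ (mem_univ j),
        Finset.sum_congr rfl fun k' hk' => sum_comp_apply₂_eq (fun x y => b x * b y)
          (Finset.ne_of_mem_erase hk').symm hjk] at this
      simp only [sum_const, card_erase_of_mem (mem_univ j), card_univ, nsmul_eq_mul,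
        Nat.cast_pred (Fintype.card_pos_iff.2 ⟨j⟩)] at this
      linarith
    rw [mul_assoc, hoff, mul_neg, hdiag]; ring

theorem card_mul_card_sub_one_mul_sum_sq_sum_mul_comp (a b : ι → ℝ) (hb : ∑ i, b i = 0) :
    (Fintype.card ι : ℝ) * (Fintype.card ι - 1) * ∑ π : Perm ι, (∑ j, a j * b (π j)) ^ 2 =
      Fintype.card (Perm ι) * (∑ i, b i ^ 2) *
        (Fintype.card ι * ∑ j, a j ^ 2 - (∑ j, a j) ^ 2) := by
  have hform : ∀ j k, a j * a k * (if j = k then (Fintype.card ι : ℝ) - 1 else -1) =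
      Fintype.card ι * (if j = k then a j ^ 2 else 0) - a j * a k := fun j k => by
    split_ifs with h
    · subst h; ring
    · ring
  calc
    _ = ∑ j, ∑ k, a j * a k * ((Fintype.card ι : ℝ) * (Fintype.card ι - 1) *
        ∑ π : Perm ι, b (π j) * b (π k)) := by
      have hexpand : ∀ π : Perm ι, (∑ j, a j * b (π j)) ^ 2 =
          ∑ j, ∑ k, a j * a k * (b (π j) * b (π k)) := fun π => by
        rw [sq, Finset.sum_mul_sum]
        exact Finset.sum_congr rfl fun j _ => Finset.sum_congr rfl fun k _ => by ring
      simp only [hexpand, Finset.mul_sum]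
      rw [Finset.sum_comm]
      refine Finset.sum_congr rfl fun j _ => ?_
      rw [Finset.sum_comm]
      exact Finset.sum_congr rfl fun k _ => Finset.sum_congr rfl fun π _ => by ring
    _ = Fintype.card (Perm ι) * (∑ i, b i ^ 2) *
        ∑ j, ∑ k, a j * a k * (if j = k then (Fintype.card ι : ℝ) - 1 else -1) := by
      simp only [card_mul_sum_comp_apply_mul_comp_apply b hb, Finset.mul_sum]
      exact Finset.sum_congr rfl fun j _ => Finset.sum_congr rfl fun k _ => by ring
    _ = _ := by
      simp only [hform, Finset.sum_sub_distrib, ← Finset.mul_sum, Finset.sum_ite_eq,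
        mem_univ, if_true, sq, ← Finset.sum_mul]

theorem card_mul_sum_sq_sum_mul_comp_le (a b : ι → ℝ) (ha : ∀ j, 0 ≤ a j) (hb : ∑ i, b i = 0)
    (hι : 1 < Fintype.card ι) :
    Fintype.card ι * ∑ π : Perm ι, (∑ j, a j * b (π j)) ^ 2 ≤
      Fintype.card (Perm ι) * (∑ i, b i ^ 2) * ∑ j, a j ^ 2 := by
  have hn : (0 : ℝ) < Fintype.card ι - 1 := by
    rw [sub_pos]; exact_mod_cast hι
  have hsq : ∑ j, a j ^ 2 ≤ (∑ j, a j) ^ 2 := sum_sq_le_sq_sum_of_nonneg fun j _ => ha j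
  have hB : 0 ≤ (Fintype.card (Perm ι) : ℝ) * ∑ i, b i ^ 2 := by positivity
  refine le_of_mul_le_mul_right ?_ hn
  calc _ = (Fintype.card (Perm ι) : ℝ) * (∑ i, b i ^ 2) *
        (Fintype.card ι * ∑ j, a j ^ 2 - (∑ j, a j) ^ 2) := by
        rw [← card_mul_card_sub_one_mul_sum_sq_sum_mul_comp a b hb]; ring
    _ ≤ _ := by nlinarith

theorem sum_sum_mul_comp_apply_eq_zero (a b : ι → ℝ) (hb : ∑ i, b i = 0) :
    ∑ π : Perm ι, ∑ j, a j * b (π j) = 0 := by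
  rw [Finset.sum_comm]
  refine Finset.sum_eq_zero fun j _ => ?_
  have h := card_smul_sum_comp_apply b j
  rw [hb, smul_zero, smul_eq_zero] at h
  rw [← Finset.mul_sum, h.resolve_left (Fintype.card_pos_iff.2 ⟨j⟩).ne', mul_zero]

end Equiv.Perm

section UniformVariance

variable {α β : Type*} [Fintype α] [Fintype β]

noncomputable def uniformVariance (f : α → ℝ) : ℝ :=
  (∑ x, f x ^ 2) / Fintype.card α - ((∑ x, f x) / Fintype.card α) ^ 2

theorem uniformVariance_comp_equiv (f : β → ℝ) (e : α ≃ β) :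
    uniformVariance (f ∘ e) = uniformVariance f := by
  simp only [uniformVariance, Function.comp_apply, Equiv.sum_comp e (fun y => f y ^ 2),
    Equiv.sum_comp e f, Fintype.card_congr e]

theorem uniformVariance_eq_sum_sq_sub_div [Nonempty α] (f : α → ℝ) {m : ℝ}
    (hm : ∑ x, f x = Fintype.card α * m) :
    uniformVariance f = (∑ x, (f x - m) ^ 2) / Fintype.card α := by
  have hN : (Fintype.card α : ℝ) ≠ 0 := Nat.cast_ne_zero.2 Fintype.card_ne_zero
  simp only [uniformVariance, sub_sq, Finset.sum_add_distrib, Finset.sum_sub_distrib,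
    ← Finset.sum_mul, ← Finset.mul_sum, hm, Finset.sum_const, Finset.card_univ, nsmul_eq_mul]
  field_simp
  ring

end UniformVariance

theorem sum_sq_sq_le_iSup_abs_sq_mul {ι : Type*} [Fintype ι] (v : ι → ℝ) :
    ∑ j, (v j ^ 2) ^ 2 ≤ (⨆ j, |v j|) ^ 2 * ∑ j, v j ^ 2 := by
  rw [Finset.mul_sum]
  refine Finset.sum_le_sum fun j _ => ?_
  have hj : v j ^ 2 ≤ (⨆ j, |v j|) ^ 2 := by
    rw [← sq_abs]
    exact pow_le_pow_left₀ (abs_nonneg _)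
      (le_ciSup (f := fun j => |v j|) (Finite.bddAbove_range _) j) 2
  rw [sq (v j ^ 2)]
  exact mul_le_mul_of_nonneg_right hj (sq_nonneg _)

theorem harmonic_le_log_exp_one_mul (n : ℕ) : (harmonic n : ℝ) ≤ Real.log (Real.exp 1 * n) := by
  rcases eq_or_ne n 0 with rfl | hn
  · simp
  rw [Real.log_mul (Real.exp_ne_zero 1) (by positivity), Real.log_exp]
  exact_mod_cast harmonic_le_one_add_log n

-- `tailHarmonic n i = 1/n + 1/(n-1) + ⋯ + 1/(n-i)` is the paper's `H(i + 1)`: the positions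
-- `π⁻¹ j` of the statement are `0`-based.
noncomputable def tailHarmonic (n i : ℕ) : ℝ := ∑ s ∈ range (i + 1), 1 / ((n : ℝ) - s)

theorem sum_range_tailHarmonic (n : ℕ) : ∑ i ∈ range n, tailHarmonic n i = n := by
  have hterm : ∀ i ∈ range n, ∑ _j ∈ Ico i n, 1 / ((n : ℝ) - i) = 1 := fun i hi => by
    have hi : i < n := mem_range.1 hi
    have hpos : (0 : ℝ) < n - i := by rw [sub_pos]; exact_mod_cast hi
    rw [sum_const, Nat.card_Ico, nsmul_eq_mul, Nat.cast_sub hi.le]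
    field_simp
  simp only [tailHarmonic, range_eq_Ico]
  rw [← sum_Ico_Ico_comm, ← range_eq_Ico, sum_congr rfl hterm]
  simp

theorem tailHarmonic_nonneg {n i : ℕ} (hi : i < n) : 0 ≤ tailHarmonic n i := by
  refine Finset.sum_nonneg fun s hs => ?_
  have : (s : ℝ) < n := by exact_mod_cast (mem_range.1 hs).trans_le hi
  exact div_nonneg zero_le_one (by linarith)

theorem tailHarmonic_pred (n : ℕ) : tailHarmonic n (n - 1) = harmonic n := by
  rcases Nat.eq_zero_or_pos n with rfl | hn
  · simp [tailHarmonic]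
  rw [tailHarmonic, Nat.sub_add_cancel hn, harmonic, ← sum_range_reflect, Rat.cast_sum]
  refine Finset.sum_congr rfl fun s hs => ?_
  have hs : s < n := mem_range.1 hs
  rw [Nat.cast_sub (by omega), Nat.cast_sub hn]
  push_cast
  ring_nf

theorem tailHarmonic_le_harmonic {n i : ℕ} (hi : i < n) : tailHarmonic n i ≤ harmonic n := by
  rw [← tailHarmonic_pred]
  refine sum_le_sum_of_subset_of_nonneg (range_subset_range.2 (by omega)) fun s hs _ => ?_
  have : (s : ℝ) < n := by exact_mod_cast (mem_range.1 hs).trans_le (by omega)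
  exact div_nonneg zero_le_one (by linarith)

theorem sum_sq_tailHarmonic_sub_one_le (n : ℕ) :
    ∑ i : Fin n, (tailHarmonic n i - 1) ^ 2 ≤ n * Real.log (Real.exp 1 * n) ^ 2 := by
  have hsum : ∑ i : Fin n, tailHarmonic n i = n := by
    rw [Fin.sum_univ_eq_sum_range (tailHarmonic n) n, sum_range_tailHarmonic]
  have hle : ∀ i : Fin n, tailHarmonic n i ^ 2 ≤ Real.log (Real.exp 1 * n) ^ 2 := fun i =>
    pow_le_pow_left₀ (tailHarmonic_nonneg i.2)
      ((tailHarmonic_le_harmonic i.2).trans (harmonic_le_log_exp_one_mul n)) 2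
  calc _ = ∑ i : Fin n, tailHarmonic n i ^ 2 - n := by
        simp only [sub_sq, mul_one, one_pow, sum_add_distrib, sum_sub_distrib, ← mul_sum, hsum,
          sum_const, card_univ, Fintype.card_fin, nsmul_eq_mul]
        ring
    _ ≤ ∑ _i : Fin n, Real.log (Real.exp 1 * n) ^ 2 := by
        linarith [sum_le_sum fun i (_ : i ∈ univ) => hle i, (n.cast_nonneg : (0 : ℝ) ≤ n)]
    _ = _ := by simp

theorem uniformVariance_sum_mul_tailHarmonic_le {n : ℕ} (hn : 2 ≤ n) (w : Fin n → ℝ)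
    (hw : ∀ j, 0 ≤ w j) :
    uniformVariance (fun π : Equiv.Perm (Fin n) => ∑ j, w j * tailHarmonic n (π j)) ≤
      Real.log (Real.exp 1 * n) ^ 2 * ∑ j, w j ^ 2 := by
  set T : Equiv.Perm (Fin n) → ℝ := fun π => ∑ j, w j * tailHarmonic n (π j)
  set b : Fin n → ℝ := fun i => tailHarmonic n i - 1
  have hb : ∑ i, b i = 0 := by
    simp [b, Fin.sum_univ_eq_sum_range (tailHarmonic n) n, sum_range_tailHarmonic]
  have hT : ∀ π, T π - ∑ j, w j = ∑ j, w j * b (π j) := fun π => by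
    simp [T, b, mul_sub, sum_sub_distrib]
  have hmean : ∑ π, T π = Fintype.card (Equiv.Perm (Fin n)) * ∑ j, w j := by
    have := Equiv.Perm.sum_sum_mul_comp_apply_eq_zero w b hb
    simp only [← hT, sum_sub_distrib, sum_const, card_univ, nsmul_eq_mul] at this
    linarith
  have hn' : (0 : ℝ) < n := by positivity
  rw [uniformVariance_eq_sum_sq_sub_div T hmean]
  calc _ ≤ (∑ i, b i ^ 2) * (∑ j, w j ^ 2) / n := by
        have := Equiv.Perm.card_mul_sum_sq_sum_mul_comp_le w b hw hb
          (by rw [Fintype.card_fin]; omega)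
        rw [div_le_div_iff₀ (by positivity) hn']
        simp only [Fintype.card_fin, ← hT] at this
        linarith
    _ ≤ _ := by
        rw [div_le_iff₀ hn', mul_right_comm]
        exact mul_le_mul_of_nonneg_right (by linarith [sum_sq_tailHarmonic_sub_one_le n])
          (by positivity)

/-- Variance bound for `Tₙ = ∑ⱼ vⱼ² H(π⁻¹(j))`:
`Var[Tₙ] ≤ ‖v‖⁴ ((‖v‖_∞²/‖v‖²)(log(en))² + 1/(n-1))` for `n ≥ 2`. -/
theorem variance_Tn (n : ℕ) (hn : 2 ≤ n) (v : Fin n → ℝ) :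
    (∑ π : Equiv.Perm (Fin n), (∑ j,
        v j ^ 2 * ∑ s ∈ Finset.range ((π⁻¹ j).1 + 1), 1 / ((n : ℝ) - s)) ^ 2) /
      (Fintype.card (Equiv.Perm (Fin n))) -
    ((∑ π : Equiv.Perm (Fin n), ∑ j,
        v j ^ 2 * ∑ s ∈ Finset.range ((π⁻¹ j).1 + 1), 1 / ((n : ℝ) - s)) /
      (Fintype.card (Equiv.Perm (Fin n)))) ^ 2 ≤
    (∑ j, v j ^ 2) ^ 2 *
      ((⨆ j, |v j|) ^ 2 / (∑ j, v j ^ 2) * (Real.log (Real.exp 1 * n)) ^ 2 +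
        1 / ((n : ℝ) - 1)) := by
  set W := ∑ j, v j ^ 2
  set M := ⨆ j, |v j|
  set L := Real.log (Real.exp 1 * n)
  set T : Equiv.Perm (Fin n) → ℝ := fun π => ∑ j, v j ^ 2 * tailHarmonic n (π j)
  have hvar : uniformVariance (T ∘ Equiv.inv _) ≤ L ^ 2 * (M ^ 2 * W) :=
    (uniformVariance_comp_equiv T _).trans_le <|
      (uniformVariance_sum_mul_tailHarmonic_le hn _ fun j => sq_nonneg (v j)).trans <|
        mul_le_mul_of_nonneg_left (sum_sq_sq_le_iSup_abs_sq_mul v) (sq_nonneg L)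
  have hWM : W ^ 2 * (M ^ 2 / W) = M ^ 2 * W := by
    rcases eq_or_ne W 0 with hW | hW
    · simp [hW]
    · field_simp
  have hn1 : (0 : ℝ) ≤ 1 / (n - 1) := by
    rw [one_div_nonneg, sub_nonneg]; exact_mod_cast (by omega : 1 ≤ n)
  refine hvar.trans ?_
  nlinarith [mul_nonneg (sq_nonneg W) hn1]
end
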